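/- arXiv:1802.03648 — 7 statements merged into one kernel-verified Lean document; each statement's English description precedes it below -/
import Mathlib

section
/- (Mantel–Turán) Let G be a graph on n vertices such that every 3-element subset of the vertices contains at least one edge of G. Then G has at least C(⌊n/2⌋, 2) + C(⌈n/2⌉, 2) edges. -/
open Finset

lemma range_mod2_card (n : ℕ) :
    (((Finset.range n).filter (fun x => x % 2 = 0)).card = (n + 1) / 2) ∧
    (((Finset.range n).filter (fun x => x % 2 = 1)).card = n / 2) := by
  induction n with
  | zero => simp
  | succ n ih =>
    rw [Finset.range_add_one, Finset.filter_insert, Finset.filter_insert]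
    rcases Nat.even_or_odd n with h | h
    · have h0 : n % 2 = 0 := Nat.even_iff.mp h
      rw [if_pos h0, if_neg (by omega)]
      rw [Finset.card_insert_of_notMem (by simp)]
      omega
    · have h1 : n % 2 = 1 := Nat.odd_iff.mp h
      rw [if_neg (by omega), if_pos h1]
      rw [Finset.card_insert_of_notMem (by simp)]
      omega

lemma fin_mod2_card (n : ℕ) (r : ℕ) (hr : r < 2) :
    ((Finset.univ : Finset (Fin n)).filter (fun v => v.val % 2 = r)).card
      = ((Finset.range n).filter (fun x => x % 2 = r)).card := by
  apply Finset.card_bij (fun v _ => v.val)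
  · intro v hv
    simp only [Finset.mem_filter, Finset.mem_range] at *
    exact ⟨v.isLt, hv.2⟩
  · intro a ha b hb hab
    exact Fin.ext hab
  · intro b hb
    simp only [Finset.mem_filter, Finset.mem_range] at hb
    exact ⟨⟨b, hb.1⟩, by simp [hb.2], rfl⟩

lemma turan2_card (n : ℕ) :
    (SimpleGraph.turanGraph n 2).edgeFinset.card ≤ n / 2 * ((n + 1) / 2) := by
  have key := SimpleGraph.two_mul_card_edgeFinset (G := SimpleGraph.turanGraph n 2)
  set A : Finset (Fin n) := Finset.univ.filter (fun v => v.val % 2 = 0) with hA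
  set B : Finset (Fin n) := Finset.univ.filter (fun v => v.val % 2 = 1) with hB
  have hAcard : A.card = (n + 1) / 2 := by
    rw [hA, fin_mod2_card n 0 (by norm_num), (range_mod2_card n).1]
  have hBcard : B.card = n / 2 := by
    rw [hB, fin_mod2_card n 1 (by norm_num), (range_mod2_card n).2]
  have hset : (Finset.univ.filter fun (p : Fin n × Fin n) =>
      (SimpleGraph.turanGraph n 2).Adj p.1 p.2) = A ×ˢ B ∪ B ×ˢ A := by
    ext ⟨x, y⟩
    simp only [SimpleGraph.turanGraph_adj, Finset.mem_filter, Finset.mem_union,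
      Finset.mem_product, hA, hB, Finset.mem_univ, true_and]
    constructor
    · intro hxy
      simp only [ne_eq] at hxy
      omega
    · intro hxy
      simp only [ne_eq]
      omega
  have hdisj : Disjoint (A ×ˢ B) (B ×ˢ A) := by
    rw [Finset.disjoint_left]
    rintro ⟨x, y⟩ hx hy
    simp only [Finset.mem_product, hA, hB, Finset.mem_filter, Finset.mem_univ, true_and] at hx hy
    omega
  have h2 : 2 * (SimpleGraph.turanGraph n 2).edgeFinset.card
      = n / 2 * ((n + 1) / 2) + n / 2 * ((n + 1) / 2) := by
    rw [key, hset, Finset.card_union_of_disjoint hdisj, Finset.card_product,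
      Finset.card_product, hAcard, hBcard]
    ring
  omega

/-- Mantel–Turán: if every 3-subset of the vertices of a graph `G` contains an
edge, then `G` has at least `C(⌊n/2⌋,2) + C(⌈n/2⌉,2)` edges. -/
theorem stmt3 (n : ℕ) (G : SimpleGraph (Fin n)) [DecidableRel G.Adj]
    (h : ∀ S : Finset (Fin n), S.card = 3 → ∃ u ∈ S, ∃ v ∈ S, G.Adj u v) :
    Nat.choose (n / 2) 2 + Nat.choose ((n + 1) / 2) 2 ≤ G.edgeFinset.card := by
  classical
  -- the complement is triangle-free
  have hcf : Gᶜ.CliqueFree 3 := by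
    intro s hs
    obtain ⟨u, hu, v, hv, huv⟩ := h s hs.2
    have := hs.1 hu hv huv.ne
    exact this.2 huv
  -- bound the complement's edge count via Turán maximality of the Turán graph
  have htm := SimpleGraph.isTuranMaximal_turanGraph (n := n) (r := 2) (by norm_num)
  have hle : Gᶜ.edgeFinset.card ≤ (SimpleGraph.turanGraph n 2).edgeFinset.card :=
    htm.2 hcf
  have hccard : Gᶜ.edgeFinset.card ≤ n / 2 * ((n + 1) / 2) :=
    hle.trans (turan2_card n)
  -- edge counts of G and Gᶜ sum to n choose 2
  have hsum : G.edgeFinset.card + Gᶜ.edgeFinset.card = Nat.choose n 2 := by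
    have hdisj : Disjoint G.edgeFinset Gᶜ.edgeFinset :=
      SimpleGraph.disjoint_edgeFinset.mpr disjoint_compl_right
    have hunion : G.edgeFinset ∪ Gᶜ.edgeFinset = (⊤ : SimpleGraph (Fin n)).edgeFinset := by
      ext e
      induction e using Sym2.ind with
      | _ a b =>
        simp only [Finset.mem_union, SimpleGraph.mem_edgeFinset, SimpleGraph.mem_edgeSet,
          SimpleGraph.compl_adj, SimpleGraph.top_adj]
        constructor
        · rintro (hab | ⟨hne, _⟩)
          · exact hab.ne
          · exact hne
        · intro hne
          by_cases hadj : G.Adj a b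
          · exact Or.inl hadj
          · exact Or.inr ⟨hne, hadj⟩
    calc G.edgeFinset.card + Gᶜ.edgeFinset.card
        = (G.edgeFinset ∪ Gᶜ.edgeFinset).card := (Finset.card_union_of_disjoint hdisj).symm
      _ = (⊤ : SimpleGraph (Fin n)).edgeFinset.card := by rw [hunion]
      _ = Nat.choose (Fintype.card (Fin n)) 2 :=
          SimpleGraph.card_edgeFinset_top_eq_card_choose_two
      _ = Nat.choose n 2 := by rw [Fintype.card_fin]
  -- arithmetic
  have key : n * (n - 1) = n / 2 * (n / 2 - 1) + (n + 1) / 2 * ((n + 1) / 2 - 1)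
      + 2 * (n / 2 * ((n + 1) / 2)) := by
    rcases Nat.even_or_odd n with ⟨k, hk⟩ | ⟨k, hk⟩
    · have e1 : n / 2 = k := by omega
      have e2 : (n + 1) / 2 = k := by omega
      rw [e1, e2, hk]
      rcases k with _ | k
      · simp
      · have e3 : k + 1 + (k + 1) - 1 = 2 * k + 1 := by omega
        rw [e3, Nat.add_sub_cancel]
        ring
    · have e1 : n / 2 = k := by omega
      have e2 : (n + 1) / 2 = k + 1 := by omega
      rw [e1, e2, hk]
      rcases k with _ | k
      · simp
      · have e3 : 2 * (k + 1) + 1 - 1 = 2 * (k + 1) := by omega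
        have e4 : k + 1 + 1 - 1 = k + 1 := by omega
        have e5 : k + 1 - 1 = k := by omega
        rw [e3, e4, e5]
        ring
  rw [Nat.choose_two_right] at hsum
  rw [Nat.choose_two_right, Nat.choose_two_right]
  omega
end

section
/- (Turán with involution) Let G be a graph on [n] and let τ be an involution on [n] such that for every 3-element subset S ⊆ [n], |E(G[S])| + |E(G[τ(S)])| ≥ 2 (edges counted with multiplicity across the two induced subgraphs). Then |E(G)| ≥ C(⌊n/2⌋, 2) + C(⌈n/2⌉, 2). -/
/-- Number of edges of a graph `G` with both endpoints in `S`. -/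
def edgesIn {n : ℕ} (G : SimpleGraph (Fin n)) [DecidableRel G.Adj]
    (S : Finset (Fin n)) : ℕ :=
  ((S ×ˢ S).filter fun p => p.1 < p.2 ∧ G.Adj p.1 p.2).card

section Aux

variable {n : ℕ} (G : SimpleGraph (Fin n)) [DecidableRel G.Adj]

/-- indicator of adjacency -/
def EE (x y : Fin n) : ℕ := if G.Adj x y then 1 else 0

lemma EE_symm (x y : Fin n) : EE G x y = EE G y x := by
  by_cases ha : G.Adj x y
  · simp [EE, ha, ha.symm]
  · simp [EE, ha, (show ¬ G.Adj y x from fun hc => ha hc.symm)]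

lemma EE_diag (x : Fin n) : EE G x x = 0 := by simp [EE]

lemma pairlem {x y : Fin n} (hxy : x ≠ y) :
    ((if x < y ∧ G.Adj x y then 1 else 0) + (if y < x ∧ G.Adj y x then 1 else 0) : ℕ)
      = EE G x y := by
  rcases lt_or_gt_of_ne hxy with hlt | hlt
  · by_cases ha : G.Adj x y <;> simp [EE, hlt, ha, lt_asymm hlt]
  · have hadj : G.Adj y x ↔ G.Adj x y := G.adj_comm y x
    by_cases ha : G.Adj x y <;> simp [EE, hlt, ha, lt_asymm hlt, hadj]

lemma tripleEdges {a b c : Fin n} (hab : a ≠ b) (hac : a ≠ c) (hbc : b ≠ c) :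
    edgesIn G {a, b, c} = EE G a b + EE G a c + EE G b c := by
  have hinner : ∀ f : Fin n → ℕ, ∑ y ∈ ({a, b, c} : Finset (Fin n)), f y = f a + f b + f c := by
    intro f
    rw [show ({a, b, c} : Finset (Fin n)) = insert a (insert b {c}) from rfl,
      Finset.sum_insert (by simp [hab, hac]), Finset.sum_insert (by simp [hbc]),
      Finset.sum_singleton, add_assoc]
  rw [edgesIn, Finset.card_filter, Finset.sum_product]
  rw [hinner]
  simp only [hinner]
  have d1 : (if a < a ∧ G.Adj a a then (1:ℕ) else 0) = 0 := by simp
  have d2 : (if b < b ∧ G.Adj b b then (1:ℕ) else 0) = 0 := by simp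
  have d3 : (if c < c ∧ G.Adj c c then (1:ℕ) else 0) = 0 := by simp
  have p1 := pairlem G hab
  have p2 := pairlem G hac
  have p3 := pairlem G hbc
  omega

end Aux

lemma twoChoose (j : ℕ) : 2 * Nat.choose j 2 = j * (j - 1) := by
  induction j with
  | zero => rfl
  | succ j ih =>
    rw [Nat.choose_succ_succ, Nat.choose_one_right, Nat.mul_add, ih]
    cases j with
    | zero => rfl
    | succ i =>
      simp only [Nat.succ_sub_one]
      ring

lemma arith1 (k : ℕ) :
    Nat.choose ((k + 2) / 2) 2 + Nat.choose ((k + 3) / 2) 2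
      = Nat.choose (k / 2) 2 + Nat.choose ((k + 1) / 2) 2 + k := by
  have hstep : ∀ j : ℕ, Nat.choose (j + 1) 2 = Nat.choose j 2 + j := by
    intro j
    rw [Nat.choose_succ_succ j 1, Nat.choose_one_right]
    exact add_comm j (j.choose 2)
  rcases Nat.even_or_odd k with ⟨j, hj⟩ | ⟨j, hj⟩
  · subst hj
    have e1 : (j + j + 2) / 2 = j + 1 := by omega
    have e2 : (j + j + 3) / 2 = j + 1 := by omega
    have e3 : (j + j) / 2 = j := by omega
    have e4 : (j + j + 1) / 2 = j := by omega
    rw [e1, e2, e3, e4, hstep]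
    omega
  · subst hj
    have e1 : (2 * j + 1 + 2) / 2 = j + 1 := by omega
    have e2 : (2 * j + 1 + 3) / 2 = j + 2 := by omega
    have e3 : (2 * j + 1) / 2 = j := by omega
    have e4 : (2 * j + 1 + 1) / 2 = j + 1 := by omega
    rw [e1, e2, e3, e4, hstep, hstep (j+1), hstep]
    omega

lemma arith2 (m : ℕ) :
    4 * (Nat.choose (m / 2) 2 + Nat.choose ((m + 1) / 2) 2) ≤ m * (m - 1) := by
  rcases Nat.even_or_odd m with ⟨j, hj⟩ | ⟨j, hj⟩
  · subst hj
    have e1 : (j + j) / 2 = j := by omega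
    have e2 : (j + j + 1) / 2 = j := by omega
    rw [e1, e2]
    have h2 := twoChoose j
    have : (j + j) * (j + j - 1) = 4 * (j * (j - 1)) + 2 * j := by
      cases j with
      | zero => rfl
      | succ i =>
        have h1 : i + 1 + (i + 1) - 1 = 2 * i + 1 := by omega
        have h2 : i + 1 - 1 = i := by omega
        rw [h1, h2]; ring
    omega
  · subst hj
    have e1 : (2 * j + 1) / 2 = j := by omega
    have e2 : (2 * j + 1 + 1) / 2 = j + 1 := by omega
    rw [e1, e2]
    have h2 := twoChoose j
    have h3 := twoChoose (j + 1)
    have : (2 * j + 1) * (2 * j + 1 - 1) = 2 * (j * (j - 1)) + 2 * ((j+1) * (j + 1 - 1)) + 2 * j := by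
      cases j with
      | zero => rfl
      | succ i =>
        have h1 : 2 * (i + 1) + 1 - 1 = 2 * i + 2 := by omega
        have h2 : i + 1 - 1 = i := by omega
        have h3 : i + 1 + 1 - 1 = i + 1 := by omega
        rw [h1, h2, h3]; ring
    omega

lemma mainlem {n : ℕ} (d : Fin n → Fin n → ℕ) (hsym : ∀ x y, d x y = d y x)
    (hdiag : ∀ x, d x x = 0) :
    ∀ V : Finset (Fin n),
      (∀ x ∈ V, ∀ y ∈ V, ∀ z ∈ V, x ≠ y → x ≠ z → y ≠ z → 2 ≤ d x y + d x z + d y z) →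
      4 * (Nat.choose (V.card / 2) 2 + Nat.choose ((V.card + 1) / 2) 2)
        ≤ ∑ x ∈ V, ∑ y ∈ V, d x y := by
  intro V
  induction V using Finset.strongInduction with
  | _ V ih =>
    intro htri
    by_cases hz : ∃ x ∈ V, ∃ y ∈ V, x ≠ y ∧ d x y = 0
    · obtain ⟨x, hx, y, hy, hxy, hdxy⟩ := hz
      set V' := (V.erase x).erase y with hV'
      have hyex : y ∈ V.erase x := Finset.mem_erase.2 ⟨Ne.symm hxy, hy⟩
      have hyV' : y ∉ V' := Finset.notMem_erase y _
      have hxV' : x ∉ V' := fun hc =>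
        (Finset.notMem_erase x V) (Finset.mem_of_mem_erase hc)
      have hxIns : x ∉ insert y V' := by
        simp only [Finset.mem_insert]
        rintro (h1 | h1)
        · exact hxy h1
        · exact hxV' h1
      have hVeq : insert x (insert y V') = V := by
        rw [hV', Finset.insert_erase hyex, Finset.insert_erase hx]
      have hcard : V.card = V'.card + 2 := by
        rw [← hVeq, Finset.card_insert_of_notMem hxIns, Finset.card_insert_of_notMem hyV']
      have hsub : V' ⊂ V := by
        constructor
        · intro a ha
          exact Finset.mem_of_mem_erase (Finset.mem_of_mem_erase ha)
        · intro hVsub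
          exact hxV' (hVsub hx)
      have hV'mem : ∀ z ∈ V', z ∈ V ∧ z ≠ x ∧ z ≠ y := by
        intro z hzV
        have h1 := Finset.mem_erase.1 hzV
        have h2 := Finset.mem_erase.1 h1.2
        exact ⟨h2.2, h2.1, h1.1⟩
      -- expand the sum
      have hrow : ∀ a : Fin n, ∑ b ∈ V, d a b = d a x + d a y + ∑ b ∈ V', d a b := by
        intro a
        rw [← hVeq, Finset.sum_insert hxIns, Finset.sum_insert hyV', ← add_assoc]
      have expand : ∑ a ∈ V, ∑ b ∈ V, d a b
          = 2 * d x y + 2 * (∑ z ∈ V', (d x z + d y z)) + ∑ a ∈ V', ∑ b ∈ V', d a b := by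
        calc ∑ a ∈ V, ∑ b ∈ V, d a b
            = ∑ a ∈ V, (d a x + d a y + ∑ b ∈ V', d a b) := by
              exact Finset.sum_congr rfl fun a _ => hrow a
          _ = (d x x + d x y + ∑ b ∈ V', d x b) + ((d y x + d y y + ∑ b ∈ V', d y b)
              + ∑ a ∈ V', (d a x + d a y + ∑ b ∈ V', d a b)) := by
              rw [← hVeq, Finset.sum_insert hxIns, Finset.sum_insert hyV']
          _ = 2 * d x y + 2 * (∑ z ∈ V', (d x z + d y z)) + ∑ a ∈ V', ∑ b ∈ V', d a b := by
              rw [hdiag x, hdiag y, hsym y x]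
              rw [Finset.sum_add_distrib, Finset.sum_add_distrib]
              have c1 : ∑ a ∈ V', d a x = ∑ a ∈ V', d x a :=
                Finset.sum_congr rfl fun a _ => hsym a x
              have c2 : ∑ a ∈ V', d a y = ∑ a ∈ V', d y a :=
                Finset.sum_congr rfl fun a _ => hsym a y
              rw [c1, c2, Finset.sum_add_distrib]
              ring
      have hcross : 2 * V'.card ≤ ∑ z ∈ V', (d x z + d y z) := by
        calc 2 * V'.card = ∑ _z ∈ V', 2 := by rw [Finset.sum_const, smul_eq_mul, mul_comm]
          _ ≤ ∑ z ∈ V', (d x z + d y z) := by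
              refine Finset.sum_le_sum fun z hzV => ?_
              obtain ⟨hzV2, hzx, hzy⟩ := hV'mem z hzV
              have := htri x hx y hy z hzV2 hxy (Ne.symm hzx) (Ne.symm hzy)
              omega
      have hih := ih V' hsub (fun a ha b hb c hc => htri a (hV'mem a ha).1 b (hV'mem b hb).1
        c (hV'mem c hc).1)
      have harith := arith1 V'.card
      rw [hcard]
      have h23 : V'.card + 2 + 1 = V'.card + 3 := rfl
      rw [h23, harith]
      omega
    · push_neg at hz
      have hrow : ∀ x ∈ V, V.card - 1 ≤ ∑ y ∈ V, d x y := by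
        intro x hx
        have h1 : ∑ y ∈ V.erase x, 1 ≤ ∑ y ∈ V.erase x, d x y := by
          refine Finset.sum_le_sum fun y hy => ?_
          have hyx : y ≠ x := (Finset.mem_erase.1 hy).1
          have := hz x hx y (Finset.mem_of_mem_erase hy) (Ne.symm hyx)
          omega
        have h2 : ∑ y ∈ V.erase x, d x y ≤ ∑ y ∈ V, d x y :=
          Finset.sum_le_sum_of_subset (Finset.erase_subset x V)
        have h3 : ∑ y ∈ V.erase x, (1:ℕ) = V.card - 1 := by
          rw [Finset.sum_const, smul_eq_mul, mul_one, Finset.card_erase_of_mem hx]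
        omega
      have hT : V.card * (V.card - 1) ≤ ∑ x ∈ V, ∑ y ∈ V, d x y := by
        calc V.card * (V.card - 1) = ∑ _x ∈ V, (V.card - 1) := by
              rw [Finset.sum_const, smul_eq_mul]
          _ ≤ ∑ x ∈ V, ∑ y ∈ V, d x y := Finset.sum_le_sum hrow
      exact le_trans (arith2 V.card) hT

/-- Turán with involution: if `τ∘τ = id` and every 3-set `S` satisfies
`|E(G[S])| + |E(G[τ(S)])| ≥ 2`, then `|E(G)| ≥ C(⌊n/2⌋,2) + C(⌈n/2⌉,2)`. -/
theorem stmt4 (n : ℕ) (G : SimpleGraph (Fin n)) [DecidableRel G.Adj]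
    (τ : Fin n → Fin n) (hτ : ∀ i, τ (τ i) = i)
    (h : ∀ S : Finset (Fin n), S.card = 3 →
      2 ≤ edgesIn G S + edgesIn G (S.image τ)) :
    Nat.choose (n / 2) 2 + Nat.choose ((n + 1) / 2) 2 ≤ G.edgeFinset.card := by
  have hinv : Function.Involutive τ := hτ
  have hbij : Function.Bijective τ := hinv.bijective
  set d : Fin n → Fin n → ℕ := fun x y => EE G x y + EE G (τ x) (τ y) with hd
  have hsym : ∀ x y, d x y = d y x := by
    intro x y
    simp only [hd, EE_symm G x y, EE_symm G (τ x) (τ y)]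
  have hdiag : ∀ x, d x x = 0 := by
    intro x
    simp only [hd, EE_diag]
  have htri : ∀ x ∈ (Finset.univ : Finset (Fin n)), ∀ y ∈ (Finset.univ : Finset (Fin n)),
      ∀ z ∈ (Finset.univ : Finset (Fin n)),
      x ≠ y → x ≠ z → y ≠ z → 2 ≤ d x y + d x z + d y z := by
    intro x _ y _ z _ hxy hxz hyz
    have hcard : ({x, y, z} : Finset (Fin n)).card = 3 := by
      rw [Finset.card_insert_of_notMem (by simp [hxy, hxz]),
        Finset.card_insert_of_notMem (by simp [hyz]), Finset.card_singleton]
    have himg : ({x, y, z} : Finset (Fin n)).image τ = {τ x, τ y, τ z} := by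
      simp [Finset.image_insert]
    have hh := h {x, y, z} hcard
    rw [himg] at hh
    rw [tripleEdges G hxy hxz hyz] at hh
    rw [tripleEdges G (fun hc => hxy (hbij.1 hc)) (fun hc => hxz (hbij.1 hc))
      (fun hc => hyz (hbij.1 hc))] at hh
    simp only [hd]
    omega
  have hmain := mainlem d hsym hdiag Finset.univ htri
  have hdeg : ∀ v : Fin n, G.degree v = ∑ y : Fin n, EE G v y := by
    intro v
    rw [SimpleGraph.degree, SimpleGraph.neighborFinset_eq_filter, Finset.card_filter]
    exact Finset.sum_congr rfl fun i _ => rfl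
  have hE1 : ∑ x : Fin n, ∑ y : Fin n, EE G x y = 2 * G.edgeFinset.card := by
    rw [← SimpleGraph.sum_degrees_eq_twice_card_edges]
    exact Finset.sum_congr rfl fun x _ => (hdeg x).symm
  have hE2 : ∑ x : Fin n, ∑ y : Fin n, EE G (τ x) (τ y) = 2 * G.edgeFinset.card := by
    rw [← hE1]
    refine Fintype.sum_bijective τ hbij _ _ fun x => ?_
    exact Fintype.sum_bijective τ hbij _ _ fun y => rfl
  have hsum : ∑ x : Fin n, ∑ y : Fin n, d x y = 4 * G.edgeFinset.card := by
    simp only [hd]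
    rw [Finset.sum_congr rfl fun x (_ : x ∈ Finset.univ) =>
      (Finset.sum_add_distrib (s := Finset.univ) (f := fun y => EE G x y)
        (g := fun y => EE G (τ x) (τ y)))]
    rw [Finset.sum_add_distrib, hE1, hE2]
    ring
  rw [hsum] at hmain
  simp only [Finset.card_univ, Fintype.card_fin] at hmain
  omega
end

section
/- Let X be a triangle-free graph on m vertices and let Y = Y(X) be the graph on the same vertex set whose edges are all pairs {u,w} with u ≠ w such that u and w have a common neighbor in X (i.e., Y is the union over all vertices v of the complete graph on the neighborhood N_X(v)). Then |E(Y)| + ⌊m/2⌋ ≥ |E(X)|. -/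
open Finset

private lemma div_add_div_ge_two (x y : ℚ) (hx : 0 < x) (hy : 0 < y) :
    2 ≤ x / y + y / x := by
  rw [div_add_div _ _ hy.ne' hx.ne', le_div_iff₀ (by positivity)]
  nlinarith [sq_nonneg (x - y)]

/-- Claim: for `X` triangle-free on `m` vertices and `Y` the common-neighbor graph
(`u ~ w` iff `u ≠ w` and `u,w` have a common neighbor in `X`),
`|E(Y)| + ⌊m/2⌋ ≥ |E(X)|`. -/
theorem stmt5 {V : Type*} [Fintype V] [DecidableEq V] (m : ℕ)
    (hm : Fintype.card V = m)
    (X Y : SimpleGraph V) [DecidableRel X.Adj] [DecidableRel Y.Adj]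
    (hX : X.CliqueFree 3)
    (hY : ∀ u w, Y.Adj u w ↔ u ≠ w ∧ ∃ v, X.Adj u v ∧ X.Adj w v) :
    X.edgeFinset.card ≤ Y.edgeFinset.card + m / 2 := by
  classical
  set d : V → ℕ := fun v => X.degree v with hd
  set M : V → ℕ := fun v => (X.neighborFinset v).sup d with hMdef
  -- Lemma A: M v ≤ D v + 1
  have lemA : ∀ v, M v ≤ Y.degree v + 1 := by
    intro v
    rcases (X.neighborFinset v).eq_empty_or_nonempty with h | h
    · simp [hMdef, h]
    · obtain ⟨u, hu, hsup⟩ := Finset.exists_mem_eq_sup _ h d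
      rw [hMdef]
      simp only []
      rw [hsup]
      have huv : X.Adj v u := (SimpleGraph.mem_neighborFinset _ _ _).mp hu
      have hsub : (X.neighborFinset u).erase v ⊆ Y.neighborFinset v := by
        intro w hw
        rw [Finset.mem_erase, SimpleGraph.mem_neighborFinset] at hw
        rw [SimpleGraph.mem_neighborFinset, hY]
        exact ⟨fun hvw => hw.1 hvw.symm, u, huv, hw.2.symm⟩
      have hcard := Finset.card_le_card hsub
      rw [Finset.card_erase_of_mem ((SimpleGraph.mem_neighborFinset _ _ _).mpr huv.symm)] at hcard
      have hdu : 1 ≤ d u := by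
        rw [hd]
        exact (X.degree_pos_iff_exists_adj u).mpr ⟨v, huv.symm⟩
      have : (X.neighborFinset u).card = d u := rfl
      rw [this] at hcard
      have : (Y.neighborFinset v).card = Y.degree v := rfl
      omega
  -- Lemma B: ∑ d ≤ ∑ M, via the friendship paradox over ℚ
  have lemB : (∑ v, d v) ≤ ∑ v, M v := by
    have hpos : ∀ v u, u ∈ X.neighborFinset v → (0 : ℚ) < d v ∧ (0 : ℚ) < d u := by
      intro v u hu
      rw [SimpleGraph.mem_neighborFinset] at hu
      constructor
      · exact_mod_cast (X.degree_pos_iff_exists_adj v).mpr ⟨u, hu⟩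
      · exact_mod_cast (X.degree_pos_iff_exists_adj u).mpr ⟨v, hu.symm⟩
    have hswap : (∑ v, ∑ u ∈ X.neighborFinset v, ((d u : ℚ) / d v))
        = ∑ v, ∑ u ∈ X.neighborFinset v, ((d v : ℚ) / d u) := by
      rw [Finset.sum_comm' (t' := Finset.univ) (s' := fun y => X.neighborFinset y)
        (by intro x y; simp [SimpleGraph.mem_neighborFinset, SimpleGraph.adj_comm])]
    have hlow : (∑ v, (d v : ℚ)) ≤ ∑ v, ∑ u ∈ X.neighborFinset v, ((d u : ℚ) / d v) := by
      have h2 : 2 * (∑ v, (d v : ℚ))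
          ≤ 2 * ∑ v, ∑ u ∈ X.neighborFinset v, ((d u : ℚ) / d v) := by
        calc 2 * (∑ v, (d v : ℚ))
            = ∑ v, ∑ _u ∈ X.neighborFinset v, (2 : ℚ) := by
              rw [Finset.mul_sum]
              refine Finset.sum_congr rfl fun v _ => ?_
              rw [Finset.sum_const, SimpleGraph.card_neighborFinset_eq_degree]
              push_cast [mul_comm]
              ring
          _ ≤ ∑ v, ∑ u ∈ X.neighborFinset v, ((d u : ℚ) / d v + (d v : ℚ) / d u) := by
              refine Finset.sum_le_sum fun v _ => Finset.sum_le_sum fun u hu => ?_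
              obtain ⟨h1, h2⟩ := hpos v u hu
              exact div_add_div_ge_two _ _ h2 h1
          _ = 2 * ∑ v, ∑ u ∈ X.neighborFinset v, ((d u : ℚ) / d v) := by
              rw [two_mul]
              nth_rewrite 2 [hswap]
              rw [← Finset.sum_add_distrib]
              refine Finset.sum_congr rfl fun v _ => ?_
              rw [← Finset.sum_add_distrib]
      linarith
    have hhigh : (∑ v, ∑ u ∈ X.neighborFinset v, ((d u : ℚ) / d v)) ≤ ∑ v, (M v : ℚ) := by
      refine Finset.sum_le_sum fun v _ => ?_
      rcases (X.neighborFinset v).eq_empty_or_nonempty with h | h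
      · simp [h]
      · obtain ⟨u0, hu0⟩ := h
        have hdv : (0 : ℚ) < d v := (hpos v u0 hu0).1
        rw [← Finset.sum_div, div_le_iff₀ hdv]
        have : (∑ u ∈ X.neighborFinset v, (d u : ℚ)) ≤ (X.neighborFinset v).card • (M v : ℚ) := by
          refine Finset.sum_le_card_nsmul _ _ _ fun u hu => ?_
          exact_mod_cast Finset.le_sup (f := d) hu
        rw [nsmul_eq_mul, SimpleGraph.card_neighborFinset_eq_degree] at this
        calc (∑ u ∈ X.neighborFinset v, (d u : ℚ)) ≤ (X.degree v : ℚ) * M v := this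
          _ = (M v : ℚ) * d v := by rw [hd, mul_comm]
    exact_mod_cast hlow.trans hhigh
  -- Conclude
  have hsumX : ∑ v, d v = 2 * X.edgeFinset.card := X.sum_degrees_eq_twice_card_edges
  have hsumY : ∑ v, Y.degree v = 2 * Y.edgeFinset.card := Y.sum_degrees_eq_twice_card_edges
  have hMsum : (∑ v, M v) ≤ ∑ v, (Y.degree v + 1) := Finset.sum_le_sum fun v _ => lemA v
  rw [Finset.sum_add_distrib, Finset.sum_const, Finset.card_univ, hm, smul_eq_mul, mul_one,
    hsumY] at hMsum
  rw [hsumX] at lemB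
  omega
end

section
/- Let C(n) = {(a,b,c) : 1 ≤ a < b < c ≤ n, a + c ≤ n, 2a + b ≤ n}. Then |C(n)| = ⌊n/3⌋ · C(n − ⌊n/3⌋ − 1, 2). -/
open Finset

/-- `C(n)`: the set of triples `(a,b,c)`, `1 ≤ a < b < c ≤ n`,
with `a + c ≤ n` and `2a + b ≤ n`. -/
def Cset (n : ℕ) : Finset (ℕ × ℕ × ℕ) :=
  (Finset.Icc 1 n ×ˢ Finset.Icc 1 n ×ˢ Finset.Icc 1 n).filter fun t =>
    t.1 < t.2.1 ∧ t.2.1 < t.2.2 ∧ t.1 + t.2.2 ≤ n ∧ 2 * t.1 + t.2.1 ≤ n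

lemma gauss_aux (D : ℕ) : ∀ t : ℕ, t ≤ D + 1 →
    2 * ∑ i ∈ range t, (D - i) = t * (2 * D + 1 - t) := by
  intro t
  induction t with
  | zero => simp
  | succ t ih =>
    intro h
    rw [sum_range_succ, Nat.mul_add, ih (by omega)]
    have ht : t ≤ D := by omega
    obtain ⟨e, rfl⟩ : ∃ e, D = t + e := ⟨D - t, by omega⟩
    have h1 : 2 * (t + e) + 1 - t = t + 2 * e + 1 := by omega
    have h2 : 2 * (t + e) + 1 - (t + 1) = t + 2 * e := by omega
    have h3 : t + e - t = e := by omega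
    rw [h1, h2, h3]; ring

lemma innerGauss (n a : ℕ) (ha : 1 ≤ a) :
    2 * ∑ b ∈ Icc (a + 1) (n - 2 * a), (n - a - b) = (n - a - 1) * (n - 3 * a) := by
  rcases le_or_gt n (3 * a) with h | h
  · rw [Icc_eq_empty (by omega)]
    have : n - 3 * a = 0 := by omega
    simp [this]
  · rw [← Finset.Ico_add_one_right_eq_Icc, Finset.sum_Ico_eq_sum_range]
    have hr : n - 2 * a + 1 - (a + 1) = n - 3 * a := by omega
    rw [hr]
    have hc : ∀ i ∈ range (n - 3 * a), n - a - (a + 1 + i) = (n - 2 * a - 1) - i := by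
      intro i hi; rw [mem_range] at hi; omega
    rw [sum_congr rfl hc, gauss_aux _ _ (by omega)]
    have h2 : 2 * (n - 2 * a - 1) + 1 - (n - 3 * a) = n - a - 1 := by omega
    rw [h2, Nat.mul_comm]

lemma csum (n a b : ℕ) (ha : 1 ≤ a) (hb : 1 ≤ b) :
    (∑ c ∈ Icc 1 n, if a < b ∧ b < c ∧ a + c ≤ n ∧ 2 * a + b ≤ n then 1 else 0)
      = if a < b ∧ 2 * a + b ≤ n then n - a - b else 0 := by
  by_cases hp : a < b ∧ 2 * a + b ≤ n
  · rw [if_pos hp]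
    have heq : ∀ c ∈ Icc 1 n,
        (if a < b ∧ b < c ∧ a + c ≤ n ∧ 2 * a + b ≤ n then 1 else 0)
          = if b < c ∧ a + c ≤ n then 1 else 0 := by
      intro c _
      exact if_congr (by tauto) rfl rfl
    rw [sum_congr rfl heq, ← Finset.card_filter]
    have hf : (Icc 1 n).filter (fun c => b < c ∧ a + c ≤ n) = Icc (b + 1) (n - a) := by
      ext c; simp only [mem_filter, mem_Icc]; omega
    rw [hf, Nat.card_Icc]
    omega
  · simp only [hp, if_false]
    apply sum_eq_zero
    intro c _
    rw [if_neg]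
    tauto

lemma bsum (n a : ℕ) (ha : 1 ≤ a) :
    (∑ b ∈ Icc 1 n, if a < b ∧ 2 * a + b ≤ n then n - a - b else 0)
      = ∑ b ∈ Icc (a + 1) (n - 2 * a), (n - a - b) := by
  rw [← Finset.sum_filter]
  congr 1
  ext b; simp only [mem_filter, mem_Icc]; omega

lemma card_step (n : ℕ) :
    (Cset n).card = ∑ a ∈ Icc 1 n, ∑ b ∈ Icc 1 n, ∑ c ∈ Icc 1 n,
      if a < b ∧ b < c ∧ a + c ≤ n ∧ 2 * a + b ≤ n then 1 else 0 := by
  rw [Cset, Finset.card_filter, Finset.sum_product]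
  refine sum_congr rfl fun a _ => ?_
  rw [Finset.sum_product]

lemma two_card (n : ℕ) :
    2 * (Cset n).card = ∑ a ∈ Icc 1 n, (n - a - 1) * (n - 3 * a) := by
  rw [card_step, Finset.mul_sum]
  refine sum_congr rfl fun a ha => ?_
  rw [mem_Icc] at ha
  have hstep : (∑ b ∈ Icc 1 n, ∑ c ∈ Icc 1 n,
      if a < b ∧ b < c ∧ a + c ≤ n ∧ 2 * a + b ≤ n then 1 else 0)
      = ∑ b ∈ Icc (a + 1) (n - 2 * a), (n - a - b) := by
    rw [← bsum n a ha.1]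
    refine sum_congr rfl fun b hb => ?_
    rw [mem_Icc] at hb
    exact csum n a b ha.1 hb.1
  rw [hstep, innerGauss n a ha.1]

lemma sumA (N : ℤ) : ∀ k : ℕ,
    ∑ i ∈ range k, (N - (1 + (i : ℤ)) - 1) * (N - 3 * (1 + (i : ℤ)))
      = k * (N - k - 1) * (N - k - 2) := by
  intro k
  induction k with
  | zero => simp
  | succ k ih =>
    rw [sum_range_succ, ih]
    push_cast
    ring

lemma final (n : ℕ) :
    ∑ a ∈ Icc 1 n, (n - a - 1) * (n - 3 * a)
      = n / 3 * ((n - n / 3 - 1) * (n - n / 3 - 2)) := by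
  set k := n / 3 with hk
  have h1 : 3 * k ≤ n := by omega
  have h2 : n < 3 * k + 3 := by omega
  have hsub : ∑ a ∈ Icc 1 n, (n - a - 1) * (n - 3 * a)
      = ∑ a ∈ Icc 1 k, (n - a - 1) * (n - 3 * a) := by
    refine (sum_subset (Icc_subset_Icc_right (by omega)) ?_).symm
    intro a ha hna
    rw [mem_Icc] at ha
    have hak : ¬ a ∈ Icc 1 k := hna
    rw [mem_Icc] at hak
    have : n - 3 * a = 0 := by omega
    simp [this]
  rw [hsub]
  rcases Nat.eq_zero_or_pos k with hk0 | hkpos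
  · rw [hk0]; simp
  · have hkn : k + 2 ≤ n := by omega
    have key : ((∑ a ∈ Icc 1 k, (n - a - 1) * (n - 3 * a) : ℕ) : ℤ)
        = ((k * ((n - k - 1) * (n - k - 2)) : ℕ) : ℤ) := by
      push_cast
      rw [show ((n - k - 1 : ℕ) : ℤ) = (n : ℤ) - k - 1 by omega,
        show ((n - k - 2 : ℕ) : ℤ) = (n : ℤ) - k - 2 by omega]
      rw [← Finset.Ico_add_one_right_eq_Icc, Finset.sum_Ico_eq_sum_range]
      rw [show k + 1 - 1 = k by omega]
      have hterm : ∀ i ∈ range k,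
          ((n - (1 + i) - 1 : ℕ) : ℤ) * ((n - 3 * (1 + i) : ℕ) : ℤ)
            = ((n : ℤ) - (1 + (i : ℤ)) - 1) * ((n : ℤ) - 3 * (1 + (i : ℤ))) := by
        intro i hi
        rw [mem_range] at hi
        rw [show ((n - (1 + i) - 1 : ℕ) : ℤ) = (n : ℤ) - (1 + (i : ℤ)) - 1 by omega,
          show ((n - 3 * (1 + i) : ℕ) : ℤ) = (n : ℤ) - 3 * (1 + (i : ℤ)) by omega]
      rw [sum_congr rfl hterm, sumA (n : ℤ) k]
      ring
    exact_mod_cast key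

lemma two_choose (m : ℕ) : 2 * Nat.choose m 2 = m * (m - 1) := by
  rcases m with _ | t
  · simp
  · rw [Nat.choose_two_right]
    refine Nat.mul_div_cancel' ?_
    have : Even ((t + 1 - 1) * (t + 1)) := Nat.even_mul_succ_self t
    have h2 : Even ((t + 1) * (t + 1 - 1)) := by rwa [Nat.mul_comm]
    exact h2.two_dvd

theorem stmt8 (n : ℕ) :
    (Cset n).card = (n / 3) * Nat.choose (n - n / 3 - 1) 2 := by
  have h2 : 2 * (Cset n).card = 2 * ((n / 3) * Nat.choose (n - n / 3 - 1) 2) := by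
    rw [two_card, final]
    rw [show 2 * (n / 3 * Nat.choose (n - n / 3 - 1) 2)
        = n / 3 * (2 * Nat.choose (n - n / 3 - 1) 2) by ring, two_choose]
    congr 2
  exact Nat.eq_of_mul_eq_mul_left (by norm_num) h2
end

section
/- Let G be a graph on n vertices such that every 3-element subset of vertices contains at least one edge of G. Then there exists a labeling of the vertices by {1,...,n} and a sequence of combinatorial shift operations sh_{ij} (i < j) whose composition applied to G yields a graph containing B(n) = {{a,b} : a + b ≤ n, a < b}. -/
/-- The combinatorial shift `sh_{ij}` of a set family: each member `F` with
`j ∈ F`, `i ∉ F` is replaced by `(F \ {j}) ∪ {i}` provided the latter is not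
already a member; other members are kept. -/
def shiftFam (i j : ℕ) (A : Finset (Finset ℕ)) : Finset (Finset ℕ) :=
  A.image fun F =>
    if j ∈ F ∧ i ∉ F ∧ insert i (F.erase j) ∉ A then insert i (F.erase j) else F

lemma image_pair (f : ℕ → ℕ) (a b : ℕ) :
    ({a, b} : Finset ℕ).image f = {f a, f b} := by
  rw [Finset.image_insert, Finset.image_singleton]

lemma mem_shiftFam_keep {i j : ℕ} {A : Finset (Finset ℕ)} {F : Finset ℕ} (hF : F ∈ A)
    (h : ¬(j ∈ F ∧ i ∉ F ∧ insert i (F.erase j) ∉ A)) : F ∈ shiftFam i j A := by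
  simp only [shiftFam, Finset.mem_image]
  exact ⟨F, hF, by rw [if_neg h]⟩

lemma mem_shiftFam_move {i j : ℕ} (hij : i ≠ j) {A : Finset (Finset ℕ)} {F : Finset ℕ}
    (hF : F ∈ A) (hj : j ∈ F) (hi : i ∉ F) :
    insert i (F.erase j) ∈ shiftFam i j A := by
  by_cases h3 : insert i (F.erase j) ∈ A
  · apply mem_shiftFam_keep h3
    rintro ⟨hj', -, -⟩
    have hnot : j ∉ insert i (F.erase j) := by
      simp only [Finset.mem_insert, Finset.mem_erase]
      rintro (rfl | ⟨hne, -⟩)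
      · exact hij rfl
      · exact hne rfl
    exact hnot hj' 
  · simp only [shiftFam, Finset.mem_image]
    exact ⟨F, hF, by rw [if_pos ⟨hj, hi, h3⟩]⟩

lemma erase_pair_right {x t : ℕ} (h : x ≠ t) : ({x, t} : Finset ℕ).erase t = {x} := by
  ext a
  simp only [Finset.mem_erase, Finset.mem_insert, Finset.mem_singleton, ne_eq]
  constructor
  · rintro ⟨h1, h2 | h2⟩
    · exact h2
    · exact absurd h2 h1
  · rintro rfl
    exact ⟨h, Or.inl rfl⟩

lemma pair_eq_of_mem_triple {u v x y z : ℕ} (huv : u ≠ v)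
    (hu : u ∈ ({x, y, z} : Finset ℕ)) (hv : v ∈ ({x, y, z} : Finset ℕ)) :
    ({u, v} : Finset ℕ) = {x, y} ∨ ({u, v} : Finset ℕ) = {x, z} ∨
      ({u, v} : Finset ℕ) = {y, z} := by
  simp only [Finset.mem_insert, Finset.mem_singleton] at hu hv
  rcases hu with rfl | rfl | rfl <;> rcases hv with rfl | rfl | rfl <;>
    first
      | exact absurd rfl huv
      | exact Or.inl rfl
      | exact Or.inl (Finset.pair_comm _ _)
      | exact Or.inr (Or.inl rfl)
      | exact Or.inr (Or.inl (Finset.pair_comm _ _))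
      | exact Or.inr (Or.inr rfl)
      | exact Or.inr (Or.inr (Finset.pair_comm _ _))

lemma clique_step {A : Finset (Finset ℕ)} {c p q : ℕ}
    (h : ∃ u v, u ≠ v ∧ u ∈ ({c, p, q} : Finset ℕ) ∧ v ∈ ({c, p, q} : Finset ℕ) ∧
      ({u, v} : Finset ℕ) ∈ A)
    (h1 : ({c, p} : Finset ℕ) ∉ A) (h2 : ({c, q} : Finset ℕ) ∉ A) :
    ({p, q} : Finset ℕ) ∈ A := by
  obtain ⟨u, v, huv, hu, hv, hm⟩ := h
  rcases pair_eq_of_mem_triple huv hu hv with hh | hh | hh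
  · rw [hh] at hm; exact absurd hm h1
  · rw [hh] at hm; exact absurd hm h2
  · rwa [hh] at hm

lemma pair_mem_image_invol (ρ : Equiv.Perm ℕ) (hρ : ∀ x, ρ (ρ x) = x)
    (A : Finset (Finset ℕ)) (a b : ℕ) :
    ({a, b} : Finset ℕ) ∈ A.image (Finset.image ⇑ρ) ↔ ({ρ a, ρ b} : Finset ℕ) ∈ A := by
  constructor
  · intro h
    rw [Finset.mem_image] at h
    obtain ⟨F, hF, hFe⟩ := h
    have hF2 : F = ({ρ a, ρ b} : Finset ℕ) := by
      have h2 := congrArg (Finset.image ⇑ρ) hFe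
      rw [Finset.image_image, image_pair] at h2
      rw [← h2, show (⇑ρ ∘ ⇑ρ) = id from funext hρ, Finset.image_id]
    rwa [hF2] at hF
  · intro h
    rw [Finset.mem_image]
    exact ⟨{ρ a, ρ b}, h, by rw [image_pair, hρ, hρ]⟩

lemma shiftFam_image_comm (ρ : Equiv.Perm ℕ) {i j : ℕ} (hi : ρ i = i) (hj : ρ j = j)
    (A : Finset (Finset ℕ)) :
    shiftFam i j (A.image (Finset.image ⇑ρ)) = (shiftFam i j A).image (Finset.image ⇑ρ) := by
  simp only [shiftFam]
  rw [Finset.image_image, Finset.image_image]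
  apply Finset.image_congr
  intro F hF
  simp only [Function.comp_apply]
  have h1 : j ∈ F.image ⇑ρ ↔ j ∈ F := by
    constructor
    · intro h
      rw [Finset.mem_image] at h
      obtain ⟨x, hx, hxe⟩ := h
      have : x = j := ρ.injective (by rw [hxe, hj])
      rwa [this] at hx
    · intro h
      rw [← hj]; exact Finset.mem_image_of_mem _ h
  have h2 : i ∈ F.image ⇑ρ ↔ i ∈ F := by
    constructor
    · intro h
      rw [Finset.mem_image] at h
      obtain ⟨x, hx, hxe⟩ := h
      have : x = i := ρ.injective (by rw [hxe, hi])
      rwa [this] at hx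
    · intro h
      rw [← hi]; exact Finset.mem_image_of_mem _ h
  have h3 : insert i ((F.image ⇑ρ).erase j) = (insert i (F.erase j)).image ⇑ρ := by
    rw [Finset.image_insert, hi, Finset.image_erase ρ.injective, hj]
  have h4 : (insert i (F.erase j)).image ⇑ρ ∈ A.image (Finset.image ⇑ρ) ↔
      insert i (F.erase j) ∈ A := by
    constructor
    · intro h
      rw [Finset.mem_image] at h
      obtain ⟨G, hG, hGe⟩ := h
      have hGF : G = insert i (F.erase j) := by
        have h5 := congrArg (Finset.image ⇑ρ.symm) hGe
        rw [Finset.image_image, Finset.image_image] at h5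
        simpa only [Equiv.symm_comp_self, Finset.image_id] using h5
      rwa [hGF] at hG
    · exact fun h => Finset.mem_image_of_mem _ h
  by_cases hc : j ∈ F ∧ i ∉ F ∧ insert i (F.erase j) ∉ A
  · have hcρ : j ∈ F.image ⇑ρ ∧ i ∉ F.image ⇑ρ ∧
        insert i ((F.image ⇑ρ).erase j) ∉ A.image (Finset.image ⇑ρ) :=
      ⟨h1.mpr hc.1, fun hh => hc.2.1 (h2.mp hh),
        by rw [h3]; exact fun hh => hc.2.2 (h4.mp hh)⟩
    rw [if_pos hc, if_pos hcρ, h3]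
  · have hcρ : ¬(j ∈ F.image ⇑ρ ∧ i ∉ F.image ⇑ρ ∧
        insert i ((F.image ⇑ρ).erase j) ∉ A.image (Finset.image ⇑ρ)) := by
      intro hh
      exact hc ⟨h1.mp hh.1, fun hi' => hh.2.1 (h2.mpr hi'),
        fun hA' => hh.2.2 (by rw [h3]; exact h4.mpr hA')⟩
    rw [if_neg hc, if_neg hcρ]

lemma aux_base (n c : ℕ) (A : Finset (Finset ℕ)) (hn2 : n ≤ 2*c)
    (I1 : ∀ a b : ℕ, 1 ≤ a → a < c → a < b → a + b ≤ n → ({a, b} : Finset ℕ) ∈ A) :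
    ∃ (π : Equiv.Perm ℕ) (L : List (ℕ × ℕ)),
      (∀ x, x < c → π x = x) ∧ (∀ x, n + 1 < x + c → π x = x) ∧
      (∀ p ∈ L, c ≤ p.1 ∧ p.1 < p.2 ∧ p.2 + c ≤ n + 1) ∧
      (∀ a b : ℕ, 1 ≤ a → a < b → a + b ≤ n →
        ({a, b} : Finset ℕ) ∈
          L.foldr (fun p B => shiftFam p.1 p.2 B) (A.image (Finset.image ⇑π))) := by
  refine ⟨Equiv.refl ℕ, [], fun _ _ => rfl, fun _ _ => rfl, by simp, ?_⟩
  intro a b ha hab hs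
  simp only [List.foldr_nil]
  have hAr : A.image (Finset.image ⇑(Equiv.refl ℕ)) = A := by
    ext F; simp [Finset.image_id]
  rw [hAr]
  exact I1 a b ha (by omega) hab hs

lemma aux (n : ℕ) (k : ℕ) : ∀ (c : ℕ) (A : Finset (Finset ℕ)), 1 ≤ c → n ≤ 2*c + k →
    (∀ a b : ℕ, 1 ≤ a → a < c → a < b → a + b ≤ n → ({a, b} : Finset ℕ) ∈ A) →
    (∀ x y z : ℕ, c ≤ x → c ≤ y → c ≤ z → x + c ≤ n+1 → y + c ≤ n+1 → z + c ≤ n+1 →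
      x ≠ y → x ≠ z → y ≠ z →
      ∃ u v, u ≠ v ∧ u ∈ ({x, y, z} : Finset ℕ) ∧ v ∈ ({x, y, z} : Finset ℕ) ∧
        ({u, v} : Finset ℕ) ∈ A) →
    ∃ (π : Equiv.Perm ℕ) (L : List (ℕ × ℕ)),
      (∀ x, x < c → π x = x) ∧ (∀ x, n + 1 < x + c → π x = x) ∧
      (∀ p ∈ L, c ≤ p.1 ∧ p.1 < p.2 ∧ p.2 + c ≤ n + 1) ∧
      (∀ a b : ℕ, 1 ≤ a → a < b → a + b ≤ n →
        ({a, b} : Finset ℕ) ∈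
          L.foldr (fun p B => shiftFam p.1 p.2 B) (A.image (Finset.image ⇑π))) := by
  induction k with
  | zero =>
    intro c A hc hk I1 I2
    exact aux_base n c A (by omega) I1
  | succ k ih =>
    intro c A hc hk I1 I2
    by_cases hstop : n ≤ 2*c
    · exact aux_base n c A hstop I1
    · push_neg at hstop
      obtain ⟨t, htc⟩ : ∃ t, t + c = n + 1 := ⟨n + 1 - c, by omega⟩
      have hct : c < t := by omega
      -- Stage 1 : a permutation π₁ of the live labels after which the key property K3 holds.
      obtain ⟨π₁, hinv, hfix, K1, K2, K3⟩ :
          ∃ π₁ : Equiv.Perm ℕ,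
            (∀ x, π₁ (π₁ x) = x) ∧
            (∀ x, x < c ∨ n + 1 < x + c → π₁ x = x) ∧
            (∀ a b : ℕ, 1 ≤ a → a < c → a < b → a + b ≤ n →
              ({a, b} : Finset ℕ) ∈ A.image (Finset.image ⇑π₁)) ∧
            (∀ x y z : ℕ, c ≤ x → c ≤ y → c ≤ z → x + c ≤ n+1 → y + c ≤ n+1 → z + c ≤ n+1 →
              x ≠ y → x ≠ z → y ≠ z →
              ∃ u v, u ≠ v ∧ u ∈ ({x, y, z} : Finset ℕ) ∧ v ∈ ({x, y, z} : Finset ℕ) ∧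
                ({u, v} : Finset ℕ) ∈ A.image (Finset.image ⇑π₁)) ∧
            (∀ x, c < x → x < t → ({c, x} : Finset ℕ) ∉ A.image (Finset.image ⇑π₁) →
              ({x, t} : Finset ℕ) ∈ A.image (Finset.image ⇑π₁)) := by
        have hAr : A.image (Finset.image ⇑(Equiv.refl ℕ)) = A := by
          ext F; simp [Finset.image_id]
        by_cases hA : ({c, t} : Finset ℕ) ∈ A
        · by_cases hEx : ∃ w, c < w ∧ w + c ≤ n + 1 ∧ ({c, w} : Finset ℕ) ∉ A
          · obtain ⟨w, hw1, hw2, hw3⟩ := hEx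
            have hwt : w < t := by
              rcases eq_or_ne w t with rfl | hne
              · exact absurd hA hw3
              · omega
            set π₁ := Equiv.swap w t with hπ₁
            have hinv : ∀ x, π₁ (π₁ x) = x := fun x => Equiv.swap_apply_self w t x
            have hπc : π₁ c = c := Equiv.swap_apply_of_ne_of_ne (by omega) (by omega)
            refine ⟨π₁, hinv, ?_, ?_, ?_, ?_⟩
            · intro x hx
              exact Equiv.swap_apply_of_ne_of_ne (by omega) (by omega)
            · intro a b h1a hac hab hs
              rw [pair_mem_image_invol π₁ hinv]
              have hπa : π₁ a = a := Equiv.swap_apply_of_ne_of_ne (by omega) (by omega)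
              rw [hπa]
              rcases eq_or_ne b w with rfl | hbw
              · rw [hπ₁, Equiv.swap_apply_left]
                exact I1 a t h1a hac (by omega) (by omega)
              · rcases eq_or_ne b t with rfl | hbt
                · rw [hπ₁, Equiv.swap_apply_right]
                  exact I1 a w h1a hac (by omega) (by omega)
                · rw [Equiv.swap_apply_of_ne_of_ne hbw hbt]
                  exact I1 a b h1a hac hab hs
            · intro x y z hx hy hz hxs hys hzs hxy hxz hyz
              have live : ∀ u, c ≤ u → u + c ≤ n + 1 → c ≤ π₁ u ∧ π₁ u + c ≤ n + 1 := by
                intro u h1 h2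
                rcases eq_or_ne u w with rfl | huw
                · rw [hπ₁, Equiv.swap_apply_left]; omega
                · rcases eq_or_ne u t with rfl | hut
                  · rw [hπ₁, Equiv.swap_apply_right]; omega
                  · rw [Equiv.swap_apply_of_ne_of_ne huw hut]; omega
              obtain ⟨u, v, huv, hu, hv, hm⟩ :=
                I2 (π₁ x) (π₁ y) (π₁ z) (live x hx hxs).1 (live y hy hys).1 (live z hz hzs).1
                  (live x hx hxs).2 (live y hy hys).2 (live z hz hzs).2
                  (fun hh => hxy (π₁.injective hh)) (fun hh => hxz (π₁.injective hh))
                  (fun hh => hyz (π₁.injective hh))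
              refine ⟨π₁ u, π₁ v, fun hh => huv (π₁.injective hh), ?_, ?_, ?_⟩
              · simp only [Finset.mem_insert, Finset.mem_singleton] at hu ⊢
                rcases hu with rfl | rfl | rfl
                exacts [Or.inl (hinv x), Or.inr (Or.inl (hinv y)), Or.inr (Or.inr (hinv z))]
              · simp only [Finset.mem_insert, Finset.mem_singleton] at hv ⊢
                rcases hv with rfl | rfl | rfl
                exacts [Or.inl (hinv x), Or.inr (Or.inl (hinv y)), Or.inr (Or.inr (hinv z))]
              · rw [pair_mem_image_invol π₁ hinv, hinv, hinv]
                exact hm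
            · intro x hcx hxt hnot
              rw [pair_mem_image_invol π₁ hinv, hπc] at hnot
              rcases eq_or_ne x w with rfl | hxw
              · rw [hπ₁, Equiv.swap_apply_left] at hnot
                exact absurd hA hnot
              · rw [Equiv.swap_apply_of_ne_of_ne hxw (by omega)] at hnot
                rw [pair_mem_image_invol π₁ hinv,
                  Equiv.swap_apply_of_ne_of_ne hxw (by omega), hπ₁, Equiv.swap_apply_right]
                exact clique_step
                  (I2 c x w le_rfl (by omega) (by omega) (by omega) (by omega) hw2
                    (by omega) (by omega) hxw) hnot hw3
          · push_neg at hEx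
            refine ⟨Equiv.refl ℕ, fun _ => rfl, fun _ _ => rfl, ?_, ?_, ?_⟩ <;> rw [hAr]
            · exact I1
            · exact I2
            · intro x hcx hxt hnot
              exact absurd (hEx x hcx (by omega)) hnot
        · refine ⟨Equiv.refl ℕ, fun _ => rfl, fun _ _ => rfl, ?_, ?_, ?_⟩ <;> rw [hAr]
          · exact I1
          · exact I2
          · intro x hcx hxt hnot
            exact clique_step
              (I2 c x t le_rfl (by omega) (by omega) (by omega) (by omega) (by omega)
                (by omega) (by omega) (by omega)) hnot hA
      set A1 := A.image (Finset.image ⇑π₁) with hA1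
      -- Stage 2 : one shift sh_{c,t}.
      have C1 : ∀ x, c < x → x + c ≤ n → ({c, x} : Finset ℕ) ∈ shiftFam c t A1 := by
        intro x hcx hxn
        by_cases hx : ({c, x} : Finset ℕ) ∈ A1
        · exact mem_shiftFam_keep hx
            (by rintro ⟨-, hcF, -⟩; exact hcF (Finset.mem_insert_self c {x}))
        · have h3 := K3 x hcx (by omega) hx
          have hmv := mem_shiftFam_move (show c ≠ t by omega) h3
            (show t ∈ ({x, t} : Finset ℕ) by simp)
            (show c ∉ ({x, t} : Finset ℕ) by
              simp only [Finset.mem_insert, Finset.mem_singleton]; omega)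
          rwa [erase_pair_right (show x ≠ t by omega)] at hmv
      have C2 : ∀ a b : ℕ, 1 ≤ a → a < c + 1 → a < b → a + b ≤ n →
          ({a, b} : Finset ℕ) ∈ shiftFam c t A1 := by
        intro a b h1 hac hab hs
        rcases eq_or_ne a c with rfl | hacc
        · exact C1 b hab (by omega)
        · have hac' : a < c := by omega
          have hF : ({a, b} : Finset ℕ) ∈ A1 := K1 a b h1 hac' hab hs
          rcases eq_or_ne b t with heq | hbt
          · apply mem_shiftFam_keep hF
            rintro ⟨-, -, h3⟩
            apply h3
            rw [heq, erase_pair_right (show a ≠ t by omega)]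
            have hk := K1 a c h1 hac' hac' (by omega)
            rwa [Finset.pair_comm a c] at hk
          · apply mem_shiftFam_keep hF
            rintro ⟨h1', -, -⟩
            simp only [Finset.mem_insert, Finset.mem_singleton] at h1'
            omega
      have C3 : ∀ x y z : ℕ, c + 1 ≤ x → c + 1 ≤ y → c + 1 ≤ z →
          x + (c+1) ≤ n+1 → y + (c+1) ≤ n+1 → z + (c+1) ≤ n+1 →
          x ≠ y → x ≠ z → y ≠ z →
          ∃ u v, u ≠ v ∧ u ∈ ({x, y, z} : Finset ℕ) ∧ v ∈ ({x, y, z} : Finset ℕ) ∧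
            ({u, v} : Finset ℕ) ∈ shiftFam c t A1 := by
        intro x y z hx hy hz hxs hys hzs hxy hxz hyz
        obtain ⟨u, v, huv, hu, hv, hm⟩ :=
          K2 x y z (by omega) (by omega) (by omega) (by omega) (by omega) (by omega)
            hxy hxz hyz
        refine ⟨u, v, huv, hu, hv, ?_⟩
        apply mem_shiftFam_keep hm
        rintro ⟨h1', -, -⟩
        simp only [Finset.mem_insert, Finset.mem_singleton] at h1' hu hv
        omega
      obtain ⟨π', L', hlo', hhi', hLb', hconc'⟩ :=
        ih (c+1) (shiftFam c t A1) (by omega) (by omega) C2 C3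
      refine ⟨π₁.trans π', L' ++ [(c, t)], ?_, ?_, ?_, ?_⟩
      · intro x hx
        rw [Equiv.trans_apply, hfix x (Or.inl hx)]
        exact hlo' x (by omega)
      · intro x hx
        rw [Equiv.trans_apply, hfix x (Or.inr hx)]
        exact hhi' x (by omega)
      · intro p hp
        rcases List.mem_append.mp hp with hmem | hmem
        · have := hLb' p hmem
          exact ⟨by omega, this.2.1, by omega⟩
        · simp only [List.mem_singleton] at hmem
          subst hmem
          exact ⟨le_rfl, hct, by omega⟩
      · intro a b h1 hab hs
        have hstep : A.image (Finset.image ⇑(π₁.trans π')) = A1.image (Finset.image ⇑π') := by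
          rw [hA1, Finset.image_image]
          apply Finset.image_congr
          intro F hF
          simp only [Function.comp_apply]
          rw [Finset.image_image, Equiv.coe_trans]
        rw [List.foldr_append]
        simp only [List.foldr_cons, List.foldr_nil]
        rw [hstep, shiftFam_image_comm π' (hlo' c (by omega)) (hhi' t (by omega))]
        exact hconc' a b h1 hab hs

/-- If every 3-subset of the vertices of `G` contains an edge, then there is a
labeling of the vertices by `{1,…,n}` and a sequence of combinatorial shifts
`sh_{ij}` (`1 ≤ i < j ≤ n`) turning the edge family of `G` into a family
containing `B(n) = {{a,b} : a < b, a + b ≤ n}`. -/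
theorem stmt13 {V : Type*} [Fintype V] [DecidableEq V] (n : ℕ)
    (hn : Fintype.card V = n) (G : SimpleGraph V) [DecidableRel G.Adj]
    (h : ∀ S : Finset V, S.card = 3 → ∃ u ∈ S, ∃ v ∈ S, G.Adj u v) :
    ∃ (σ : V ≃ Fin n) (L : List (ℕ × ℕ)),
      (∀ p ∈ L, 1 ≤ p.1 ∧ p.1 < p.2 ∧ p.2 ≤ n) ∧
      ∀ a b : ℕ, 1 ≤ a → a < b → a + b ≤ n →
        ({a, b} : Finset ℕ) ∈
          L.foldr (fun p A => shiftFam p.1 p.2 A)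
            (((Finset.univ : Finset (V × V)).filter fun p => G.Adj p.1 p.2).image
              fun p => ({(σ p.1).val + 1, (σ p.2).val + 1} : Finset ℕ)) := by
  classical
  have e : V ≃ Fin n := Fintype.equivFinOfCardEq hn
  set ℓ : V → ℕ := fun v => ((e v) : ℕ) + 1 with hℓdef
  have hℓinj : Function.Injective ℓ := by
    intro a b hab
    simp only [hℓdef] at hab
    exact e.injective (Fin.ext (by omega))
  have hℓlb : ∀ v, 1 ≤ ℓ v := by intro v; simp [hℓdef]
  have hℓub : ∀ v, ℓ v ≤ n := by
    intro v
    have := (e v).isLt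
    simp only [hℓdef]
    omega
  set A₀ := ((Finset.univ : Finset (V × V)).filter fun p => G.Adj p.1 p.2).image
    (fun p => ({ℓ p.1, ℓ p.2} : Finset ℕ)) with hA₀def
  have I2₀ : ∀ x y z : ℕ, 1 ≤ x → 1 ≤ y → 1 ≤ z → x + 1 ≤ n+1 → y + 1 ≤ n+1 → z + 1 ≤ n+1 →
      x ≠ y → x ≠ z → y ≠ z →
      ∃ u v, u ≠ v ∧ u ∈ ({x, y, z} : Finset ℕ) ∧ v ∈ ({x, y, z} : Finset ℕ) ∧
        ({u, v} : Finset ℕ) ∈ A₀ := by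
    intro x y z hx hy hz hxs hys hzs hxy hxz hyz
    obtain ⟨ux, hux⟩ : ∃ u, ℓ u = x :=
      ⟨e.symm ⟨x - 1, by omega⟩, by simp [hℓdef]; omega⟩
    obtain ⟨uy, huy⟩ : ∃ u, ℓ u = y :=
      ⟨e.symm ⟨y - 1, by omega⟩, by simp [hℓdef]; omega⟩
    obtain ⟨uz, huz⟩ : ∃ u, ℓ u = z :=
      ⟨e.symm ⟨z - 1, by omega⟩, by simp [hℓdef]; omega⟩
    have h12 : ux ≠ uy := fun hh => hxy (by rw [← hux, ← huy, hh])
    have h13 : ux ≠ uz := fun hh => hxz (by rw [← hux, ← huz, hh])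
    have h23 : uy ≠ uz := fun hh => hyz (by rw [← huy, ← huz, hh])
    have hS : ({ux, uy, uz} : Finset V).card = 3 := by
      rw [Finset.card_insert_of_notMem (by simp [h12, h13]),
        Finset.card_insert_of_notMem (by simp [h23]), Finset.card_singleton]
    obtain ⟨a, haS, b, hbS, hadj⟩ := h _ hS
    refine ⟨ℓ a, ℓ b, fun hh => hadj.ne (hℓinj hh), ?_, ?_, ?_⟩
    · simp only [Finset.mem_insert, Finset.mem_singleton] at haS ⊢
      rcases haS with rfl | rfl | rfl
      exacts [Or.inl hux, Or.inr (Or.inl huy), Or.inr (Or.inr huz)]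
    · simp only [Finset.mem_insert, Finset.mem_singleton] at hbS ⊢
      rcases hbS with rfl | rfl | rfl
      exacts [Or.inl hux, Or.inr (Or.inl huy), Or.inr (Or.inr huz)]
    · rw [hA₀def]
      exact Finset.mem_image.mpr
        ⟨(a, b), Finset.mem_filter.mpr ⟨Finset.mem_univ _, hadj⟩, rfl⟩
  obtain ⟨π, L, hlo, hhi, hLb, hconc⟩ :=
    aux n n 1 A₀ le_rfl (by omega) (by intro a b h1 h2; omega) I2₀
  have hrange : ∀ x, 1 ≤ x → x ≤ n → 1 ≤ π x ∧ π x ≤ n := by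
    intro x h1 h2
    by_contra hcon
    push_neg at hcon
    have hfx : π (π x) = π x := by
      rcases Nat.lt_or_ge (π x) 1 with hcase | hcase
      · exact hlo _ hcase
      · have := hcon hcase
        exact hhi _ (by omega)
    have hxx : π x = x := π.injective hfx
    rw [hxx] at hcon
    have := hcon h1
    omega
  have hπval : ∀ v, 1 ≤ π (ℓ v) ∧ π (ℓ v) ≤ n := fun v => hrange _ (hℓlb v) (hℓub v)
  have hσfmem : ∀ v : V, π (ℓ v) - 1 < n := by intro v; have := hπval v; omega
  set σf : V → Fin n := fun v => ⟨π (ℓ v) - 1, hσfmem v⟩ with hσfdef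
  have hσf : ∀ v, (σf v : ℕ) + 1 = π (ℓ v) := by
    intro v
    have := hπval v
    simp only [hσfdef]
    omega
  have hσinj : Function.Injective σf := by
    intro a b hab
    have h1 : π (ℓ a) = π (ℓ b) := by
      have h2 := congrArg (fun x : Fin n => (x : ℕ)) hab
      have := hπval a
      have := hπval b
      simp only [hσfdef] at h2
      omega
    exact hℓinj (π.injective h1)
  have hσbij : Function.Bijective σf :=
    (Fintype.bijective_iff_injective_and_card σf).mpr
      ⟨hσinj, by rw [hn, Fintype.card_fin]⟩
  refine ⟨Equiv.ofBijective σf hσbij, L, ?_, ?_⟩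
  · intro p hp
    have := hLb p hp
    exact ⟨this.1, this.2.1, by omega⟩
  · intro a b h1 hab hs
    have hEq : (((Finset.univ : Finset (V × V)).filter fun p => G.Adj p.1 p.2).image
        fun p => ({((Equiv.ofBijective σf hσbij) p.1).val + 1,
          ((Equiv.ofBijective σf hσbij) p.2).val + 1} : Finset ℕ))
        = A₀.image (Finset.image ⇑π) := by
      rw [hA₀def, Finset.image_image]
      apply Finset.image_congr
      intro p hp
      simp only [Function.comp_apply, Equiv.ofBijective_apply]
      rw [image_pair, hσf, hσf]
    rw [hEq]
    exact hconc a b h1 hab hs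
end

section
/- Let G be a graph on [2m] equipped with the involution τ(i) = 2m+1−i, satisfying: for every 3-set S, |E(G[S])| + |E(G[τ(S)])| ≥ 2. Suppose {i, τ(i)} ∈ E(G) for every i. Define an auxiliary graph W on [m] where {i,j} ∈ E(W) iff exactly one of the four pairs between {i, τ(i)} and {j, τ(j)} is an edge of G. Then W is triangle-free; moreover, if j and k are distinct neighbors of i in W, then at least 3 of the four pairs between {j, τ(j)} and {k, τ(k)} are edges of G. -/
/-- Number of edges of `G` inside the vertex set `S`. -/
def edgeCountIn (G : SimpleGraph ℕ) [DecidableRel G.Adj] (S : Finset ℕ) : ℕ :=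
  ((S ×ˢ S).filter fun p => p.1 < p.2 ∧ G.Adj p.1 p.2).card

/-- Number of crossing edges of `G` between `{i, τ(i)}` and `{j, τ(j)}`,
where `τ(k) = 2m+1−k`. -/
def crossCount (G : SimpleGraph ℕ) [DecidableRel G.Adj] (m i j : ℕ) : ℕ :=
  (if G.Adj i j then 1 else 0) + (if G.Adj i (2 * m + 1 - j) then 1 else 0) +
  (if G.Adj (2 * m + 1 - i) j then 1 else 0) +
  (if G.Adj (2 * m + 1 - i) (2 * m + 1 - j) then 1 else 0)

/-- The auxiliary graph `W` on `[m]`: `{i,j}` is an edge iff exactly one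
crossing edge exists between `{i,τ(i)}` and `{j,τ(j)}`. -/
def WAdj (G : SimpleGraph ℕ) [DecidableRel G.Adj] (m i j : ℕ) : Prop :=
  i ≠ j ∧ crossCount G m i j = 1

lemma edgeCountIn_triple (G : SimpleGraph ℕ) [DecidableRel G.Adj] {a b c : ℕ}
    (hab : a ≠ b) (hac : a ≠ c) (hbc : b ≠ c) :
    edgeCountIn G {a, b, c} =
      (if G.Adj a b then 1 else 0) + (if G.Adj a c then 1 else 0) +
      (if G.Adj b c then 1 else 0) := by
  have expand : ∀ f : ℕ → ℕ, ∑ x ∈ ({a, b, c} : Finset ℕ), f x = f a + (f b + f c) := by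
    intro f
    rw [show ({a, b, c} : Finset ℕ) = insert a {b, c} from rfl,
      Finset.sum_insert (by simp [hab, hac]), Finset.sum_pair hbc]
  rw [edgeCountIn, Finset.card_filter, Finset.sum_product, expand, expand, expand, expand]
  rcases hab.lt_or_gt with h1 | h1 <;> rcases hac.lt_or_gt with h2 | h2 <;>
    rcases hbc.lt_or_gt with h3 | h3 <;>
    simp [h1, h2, h3, h1.asymm, h2.asymm, h3.asymm, lt_irrefl,
      G.adj_comm b a, G.adj_comm c a, G.adj_comm c b] <;> ring

lemma key (m : ℕ) (G : SimpleGraph ℕ) [DecidableRel G.Adj]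
    (hpairs : ∀ S : Finset ℕ, S ⊆ Finset.Icc 1 (2 * m) → S.card = 3 →
      2 ≤ edgeCountIn G S + edgeCountIn G (S.image fun i => 2 * m + 1 - i))
    (a b c : ℕ)
    (ha : 1 ≤ a ∧ a ≤ 2 * m) (hb : 1 ≤ b ∧ b ≤ 2 * m) (hc : 1 ≤ c ∧ c ≤ 2 * m)
    (hab : a ≠ b) (hac : a ≠ c) (hbc : b ≠ c)
    (hab' : a ≠ 2 * m + 1 - b) (hac' : a ≠ 2 * m + 1 - c) (hbc' : b ≠ 2 * m + 1 - c)
    (h1 : ¬ G.Adj a b) (h2 : ¬ G.Adj (2 * m + 1 - a) (2 * m + 1 - b))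
    (h3 : ¬ G.Adj a c) (h4 : ¬ G.Adj (2 * m + 1 - a) (2 * m + 1 - c))
    (h5 : (if G.Adj a (2 * m + 1 - c) then 1 else 0) +
          (if G.Adj (2 * m + 1 - a) c then 1 else 0) = 1) :
    3 ≤ (if G.Adj b c then 1 else 0) + (if G.Adj b (2 * m + 1 - c) then 1 else 0) +
        (if G.Adj (2 * m + 1 - b) c then 1 else 0) +
        (if G.Adj (2 * m + 1 - b) (2 * m + 1 - c) then 1 else 0) := by
  have hcc : 2 * m + 1 - (2 * m + 1 - c) = c := by omega
  have k1 := hpairs {a, b, c}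
    (by intro x hx; simp only [Finset.mem_insert, Finset.mem_singleton] at hx
        rcases hx with rfl | rfl | rfl <;> simp [Finset.mem_Icc] <;> omega)
    (by rw [Finset.card_insert_of_notMem (by simp [hab, hac]),
        Finset.card_insert_of_notMem (by simp [hbc]), Finset.card_singleton])
  have k2 := hpairs {a, b, 2 * m + 1 - c}
    (by intro x hx; simp only [Finset.mem_insert, Finset.mem_singleton] at hx
        rcases hx with rfl | rfl | rfl <;> simp [Finset.mem_Icc] <;> omega)
    (by rw [Finset.card_insert_of_notMem (by simp [hab, hac']),
        Finset.card_insert_of_notMem (by simp [hbc']), Finset.card_singleton])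
  simp only [Finset.image_insert, Finset.image_singleton] at k1 k2
  rw [hcc] at k2
  rw [edgeCountIn_triple G hab hac hbc,
    edgeCountIn_triple G (by omega) (by omega) (by omega)] at k1
  rw [edgeCountIn_triple G hab hac' hbc',
    edgeCountIn_triple G (by omega) (by omega) (by omega)] at k2
  simp only [h1, h2, h3, h4, if_false] at k1 k2
  split_ifs at k1 k2 h5 ⊢ <;> omega

lemma choose_rep (m : ℕ) (hm : 1 ≤ m) (G : SimpleGraph ℕ) [DecidableRel G.Adj]
    (i j : ℕ) (hj : 1 ≤ j ∧ j ≤ m) (h : crossCount G m i j = 1) :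
    ∃ b, (b = j ∨ b = 2 * m + 1 - j) ∧ ¬ G.Adj i b ∧
      ¬ G.Adj (2 * m + 1 - i) (2 * m + 1 - b) ∧
      ((if G.Adj i (2 * m + 1 - b) then 1 else 0) +
       (if G.Adj (2 * m + 1 - i) b then 1 else 0) = 1) := by
  have hjj : 2 * m + 1 - (2 * m + 1 - j) = j := by omega
  rw [crossCount] at h
  by_cases e1 : G.Adj i j <;> by_cases e2 : G.Adj i (2 * m + 1 - j) <;>
    by_cases e3 : G.Adj (2 * m + 1 - i) j <;>
    by_cases e4 : G.Adj (2 * m + 1 - i) (2 * m + 1 - j) <;>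
    simp [e1, e2, e3, e4] at h
  · exact ⟨2 * m + 1 - j, Or.inr rfl, e2, by rw [hjj]; exact e3, by rw [hjj]; simp [e1, e4]⟩
  · exact ⟨j, Or.inl rfl, e1, e4, by simp [e2, e3]⟩
  · exact ⟨j, Or.inl rfl, e1, e4, by simp [e2, e3]⟩
  · exact ⟨2 * m + 1 - j, Or.inr rfl, e2, by rw [hjj]; exact e3, by rw [hjj]; simp [e1, e4]⟩

/-- `W` is triangle-free, and two distinct `W`-neighbors `j,k` of a vertex `i`
have at least 3 crossing edges between `{j,τ(j)}` and `{k,τ(k)}`. -/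
theorem stmt16 (m : ℕ) (hm : 1 ≤ m) (G : SimpleGraph ℕ) [DecidableRel G.Adj]
    (hpairs : ∀ S : Finset ℕ, S ⊆ Finset.Icc 1 (2 * m) → S.card = 3 →
      2 ≤ edgeCountIn G S + edgeCountIn G (S.image fun i => 2 * m + 1 - i))
    (hmatch : ∀ i ∈ Finset.Icc 1 (2 * m), G.Adj i (2 * m + 1 - i)) :
    (∀ i ∈ Finset.Icc 1 m, ∀ j ∈ Finset.Icc 1 m, ∀ k ∈ Finset.Icc 1 m,
      WAdj G m i j → WAdj G m j k → WAdj G m i k → False) ∧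
    (∀ i ∈ Finset.Icc 1 m, ∀ j ∈ Finset.Icc 1 m, ∀ k ∈ Finset.Icc 1 m,
      j ≠ k → WAdj G m i j → WAdj G m i k → 3 ≤ crossCount G m j k) := by
  have part2 : ∀ i ∈ Finset.Icc 1 m, ∀ j ∈ Finset.Icc 1 m, ∀ k ∈ Finset.Icc 1 m,
      j ≠ k → WAdj G m i j → WAdj G m i k → 3 ≤ crossCount G m j k := by
    intro i hi j hj k hk hjk hij hik
    simp only [Finset.mem_Icc] at hi hj hk
    obtain ⟨hnij, hcij⟩ := hij
    obtain ⟨hnik, hcik⟩ := hik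
    obtain ⟨b, hbor, hb1, hb2, _⟩ := choose_rep m hm G i j hj hcij
    obtain ⟨c, hcor, hc1, hc2, hc5⟩ := choose_rep m hm G i k hk hcik
    have hj' : 2 * m + 1 - (2 * m + 1 - j) = j := by omega
    have hk' : 2 * m + 1 - (2 * m + 1 - k) = k := by omega
    have KEY := key m G hpairs i b c (by omega) (by omega) (by omega)
      (by omega) (by omega) (by omega) (by omega) (by omega) (by omega)
      hb1 hb2 hc1 hc2 hc5
    rcases hbor with rfl | rfl <;> rcases hcor with rfl | rfl
    · rw [crossCount]; linarith
    · rw [hk'] at KEY; rw [crossCount]; linarith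
    · rw [hj'] at KEY; rw [crossCount]; linarith
    · rw [hj', hk'] at KEY; rw [crossCount]; linarith
  refine ⟨?_, part2⟩
  intro i hi j hj k hk h1 h2 h3
  have h4 := part2 i hi j hj k hk h2.1 h1 h3
  rw [h2.2] at h4
  omega
end

section
/- Let Δ be a 2-dimensional simplicial complex on vertex set [n] containing the complete graph on [n] as its 1-skeleton, whose set of 2-faces H satisfies: every 4-element subset of [n] contains at least one 2-face of Δ. Then the first reduced rational homology of Δ has dimension at most n − 2, i.e., dim H₁(Δ; ℚ) ≤ n − 2; equivalently, the rank of the boundary map ∂₂ : C₂(Δ;ℚ) → C₁(Δ;ℚ) is at least C(n−1,2) − (n−2) = C(n−2,2). -/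
/-- The boundary matrix `∂₂` of the complex with 2-faces `H`: the row of an
increasing triple `(a,b,c)` is `[a,b] + [b,c] − [a,c]`. -/
def bdryMatrix {n : ℕ} (H : Finset (Fin n × Fin n × Fin n)) :
    Matrix {t // t ∈ H} (Fin n × Fin n) ℚ := fun t p =>
  if p = (t.1.1, t.1.2.1) then 1
  else if p = (t.1.2.1, t.1.2.2) then 1
  else if p = (t.1.1, t.1.2.2) then -1
  else 0

namespace Stmt17Aux

open Finset Submodule

variable {n : ℕ}

/-- The row of a triple, as a function. -/
def rowFn (t : Fin n × Fin n × Fin n) : Fin n × Fin n → ℚ := fun p =>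
  if p = (t.1, t.2.1) then 1
  else if p = (t.2.1, t.2.2) then 1
  else if p = (t.1, t.2.2) then -1
  else 0

/-- Rows of triples whose vertices all lie in `S`. -/
def rowSet (H : Finset (Fin n × Fin n × Fin n)) (S : Finset (Fin n)) :
    Set (Fin n × Fin n → ℚ) :=
  {r | ∃ t ∈ H, t.1 ∈ S ∧ t.2.1 ∈ S ∧ t.2.2 ∈ S ∧ r = rowFn t}

/-- Projection onto the columns incident to `v`. -/
def phiv (v : Fin n) : ((Fin n × Fin n) → ℚ) →ₗ[ℚ] (Fin n → ℚ) where
  toFun u := fun z => u (z, v) - u (v, z)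
  map_add' u w := by funext z; simp [Pi.add_apply]; ring
  map_smul' c u := by funext z; simp [Pi.smul_apply]; ring

/-- Standard basis vector. -/
def evec (w : Fin n) : Fin n → ℚ := fun z => if z = w then 1 else 0

lemma phiv_row_1 {a b c : Fin n} (h1 : a < b) (h2 : b < c) :
    phiv a (rowFn (a, b, c)) = evec c - evec b := by
  have hab : a ≠ b := h1.ne
  have hbc : b ≠ c := h2.ne
  have hac : a ≠ c := (h1.trans h2).ne
  funext z
  simp only [phiv, LinearMap.coe_mk, AddHom.coe_mk, rowFn, evec, Pi.sub_apply, Prod.mk.injEq]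
  split_ifs <;> simp_all

lemma phiv_row_2 {a b c : Fin n} (h1 : a < b) (h2 : b < c) :
    phiv b (rowFn (a, b, c)) = evec a - evec c := by
  have hab : a ≠ b := h1.ne
  have hbc : b ≠ c := h2.ne
  have hac : a ≠ c := (h1.trans h2).ne
  funext z
  simp only [phiv, LinearMap.coe_mk, AddHom.coe_mk, rowFn, evec, Pi.sub_apply, Prod.mk.injEq]
  split_ifs <;> simp_all

lemma phiv_row_3 {a b c : Fin n} (h1 : a < b) (h2 : b < c) :
    phiv c (rowFn (a, b, c)) = evec b - evec a := by
  have hab : a ≠ b := h1.ne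
  have hbc : b ≠ c := h2.ne
  have hac : a ≠ c := (h1.trans h2).ne
  funext z
  simp only [phiv, LinearMap.coe_mk, AddHom.coe_mk, rowFn, evec, Pi.sub_apply, Prod.mk.injEq]
  split_ifs <;> simp_all

lemma phiv_row_notin {v a b c : Fin n} (hv1 : v ≠ a) (hv2 : v ≠ b) (hv3 : v ≠ c) :
    phiv v (rowFn (a, b, c)) = 0 := by
  funext z
  simp only [phiv, LinearMap.coe_mk, AddHom.coe_mk, rowFn, Pi.zero_apply, Prod.mk.injEq]
  split_ifs <;> simp_all

section WithH

variable (H : Finset (Fin n × Fin n × Fin n)) (S : Finset (Fin n))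

/-- Link edge of `v` within `S`. -/
def Eg (v a b : Fin n) : Prop :=
  a ∈ S ∧ b ∈ S ∧ a ≠ v ∧ b ≠ v ∧ a ≠ b ∧
    ∃ t ∈ H, ({t.1, t.2.1, t.2.2} : Finset (Fin n)) = {v, a, b}

/-- Reachability in the link of `v` within `S`. -/
def Reach (v : Fin n) : Fin n → Fin n → Prop := Relation.ReflTransGen (Eg H S v)

lemma Eg.symm {v a b : Fin n} (h : Eg H S v a b) : Eg H S v b a := by
  obtain ⟨h1, h2, h3, h4, h5, t, ht, hset⟩ := h
  exact ⟨h2, h1, h4, h3, h5.symm, t, ht, by rw [hset]; ext z; simp; tauto⟩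

lemma Reach.symm {v a b : Fin n} (h : Reach H S v a b) : Reach H S v b a :=
  (@Relation.ReflTransGen.symmetric _ _ ⟨fun _ _ h => Eg.symm H S h⟩).symm _ _ h

lemma Reach.trans {v a b c : Fin n} (h : Reach H S v a b) (h' : Reach H S v b c) :
    Reach H S v a c := Relation.ReflTransGen.trans h h'

lemma reach_ne {v a b : Fin n} (h : ¬ Reach H S v a b) : a ≠ b := by
  rintro rfl; exact h Relation.ReflTransGen.refl

variable (hinc : ∀ t ∈ H, t.1 < t.2.1 ∧ t.2.1 < t.2.2)
variable (hTuran : ∀ T : Finset (Fin n), T.card = 4 →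
      ∃ t ∈ H, t.1 ∈ T ∧ t.2.1 ∈ T ∧ t.2.2 ∈ T)

set_option maxHeartbeats 1000000 in
include hinc hTuran in
/-- Transversal lemma: three pairwise link-unreachable vertices (≠ v) form a
triple of `H`, which is a link edge of each of them. -/
lemma trans_triple {v a p q : Fin n}
    (hv : v ∈ S) (ha : a ∈ S) (hp : p ∈ S) (hq : q ∈ S)
    (hav : a ≠ v) (hpv : p ≠ v) (hqv : q ≠ v)
    (hap : ¬ Reach H S v a p) (haq : ¬ Reach H S v a q) (hpq : ¬ Reach H S v p q) :
    Eg H S a p q := by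
  have hapne : a ≠ p := reach_ne H S hap
  have haqne : a ≠ q := reach_ne H S haq
  have hpqne : p ≠ q := reach_ne H S hpq
  have hcard : ({v, a, p, q} : Finset (Fin n)).card = 4 := by
    rw [Finset.card_insert_of_notMem (by simp [Ne.symm hav, Ne.symm hpv, Ne.symm hqv]),
      Finset.card_insert_of_notMem (by simp [hapne, haqne]),
      Finset.card_insert_of_notMem (by simp [hpqne]), Finset.card_singleton]
  obtain ⟨t, ht, ht1, ht2, ht3⟩ := hTuran {v, a, p, q} hcard
  obtain ⟨h12, h23⟩ := hinc t ht
  have hmemS : ∀ x : Fin n, x ∈ ({v, a, p, q} : Finset (Fin n)) → x ∈ S := by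
    intro x hx
    simp only [mem_insert, mem_singleton] at hx
    rcases hx with rfl | rfl | rfl | rfl <;> assumption
  have hnr : ∀ α β : Fin n, α ∈ ({a, p, q} : Finset (Fin n)) →
      β ∈ ({a, p, q} : Finset (Fin n)) → α ≠ β → ¬ Reach H S v α β := by
    intro α β hα hβ hne hr
    simp only [mem_insert, mem_singleton] at hα hβ
    rcases hα with rfl | rfl | rfl <;> rcases hβ with rfl | rfl | rfl
    · exact hne rfl
    · exact hap hr
    · exact haq hr
    · exact hap (Reach.symm H S hr)
    · exact hne rfl
    · exact hpq hr
    · exact haq (Reach.symm H S hr)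
    · exact hpq (Reach.symm H S hr)
    · exact hne rfl
  by_cases hvcase : t.1 = v ∨ t.2.1 = v ∨ t.2.2 = v
  · exfalso
    have hmem3 : ∀ x : Fin n, x ∈ ({v, a, p, q} : Finset (Fin n)) → x ≠ v →
        x ∈ ({a, p, q} : Finset (Fin n)) := by
      intro x hx hxv
      simp only [mem_insert, mem_singleton] at hx ⊢
      tauto
    rcases hvcase with hv1 | hv2 | hv3
    · have hb : t.2.1 ∈ ({a,p,q} : Finset (Fin n)) := hmem3 _ ht2 (by rw [← hv1]; exact h12.ne')
      have hc : t.2.2 ∈ ({a,p,q} : Finset (Fin n)) :=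
        hmem3 _ ht3 (by rw [← hv1]; exact (h12.trans h23).ne')
      refine hnr _ _ hb hc h23.ne (Relation.ReflTransGen.single ?_)
      refine ⟨hmemS _ ht2, hmemS _ ht3, by rw [← hv1]; exact h12.ne',
        by rw [← hv1]; exact (h12.trans h23).ne', h23.ne, t, ht, ?_⟩
      rw [hv1]
    · have hb : t.1 ∈ ({a,p,q} : Finset (Fin n)) := hmem3 _ ht1 (by rw [← hv2]; exact h12.ne)
      have hc : t.2.2 ∈ ({a,p,q} : Finset (Fin n)) := hmem3 _ ht3 (by rw [← hv2]; exact h23.ne')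
      refine hnr _ _ hb hc (h12.trans h23).ne (Relation.ReflTransGen.single ?_)
      refine ⟨hmemS _ ht1, hmemS _ ht3, by rw [← hv2]; exact h12.ne,
        by rw [← hv2]; exact h23.ne', (h12.trans h23).ne, t, ht, ?_⟩
      rw [hv2]; ext z; simp; tauto
    · have hb : t.1 ∈ ({a,p,q} : Finset (Fin n)) :=
        hmem3 _ ht1 (by rw [← hv3]; exact (h12.trans h23).ne)
      have hc : t.2.1 ∈ ({a,p,q} : Finset (Fin n)) := hmem3 _ ht2 (by rw [← hv3]; exact h23.ne)
      refine hnr _ _ hb hc h12.ne (Relation.ReflTransGen.single ?_)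
      refine ⟨hmemS _ ht1, hmemS _ ht2, by rw [← hv3]; exact (h12.trans h23).ne,
        by rw [← hv3]; exact h23.ne, h12.ne, t, ht, ?_⟩
      rw [hv3]; ext z; simp; tauto
  · push_neg at hvcase
    obtain ⟨hv1, hv2, hv3⟩ := hvcase
    have hsub : ({t.1, t.2.1, t.2.2} : Finset (Fin n)) ⊆ {a, p, q} := by
      intro x hx
      simp only [mem_insert, mem_singleton] at hx ⊢
      have hmem3 : ∀ y : Fin n, y ∈ ({v, a, p, q} : Finset (Fin n)) → y ≠ v →
          y = a ∨ y = p ∨ y = q := by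
        intro y hy hyv
        simp only [mem_insert, mem_singleton] at hy
        tauto
      rcases hx with rfl | rfl | rfl
      · exact hmem3 _ ht1 hv1
      · exact hmem3 _ ht2 hv2
      · exact hmem3 _ ht3 hv3
    have hcard3 : ({t.1, t.2.1, t.2.2} : Finset (Fin n)).card = 3 := by
      rw [Finset.card_insert_of_notMem (by simp [h12.ne, (h12.trans h23).ne]),
        Finset.card_insert_of_notMem (by simp [h23.ne]), Finset.card_singleton]
    have hcard3' : ({a, p, q} : Finset (Fin n)).card = 3 := by
      rw [Finset.card_insert_of_notMem (by simp [hapne, haqne]),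
        Finset.card_insert_of_notMem (by simp [hpqne]), Finset.card_singleton]
    have heq : ({t.1, t.2.1, t.2.2} : Finset (Fin n)) = {a, p, q} :=
      Finset.eq_of_subset_of_card_le hsub (by rw [hcard3, hcard3'])
    exact ⟨hp, hq, hapne.symm, haqne.symm, hpqne, t, ht, heq⟩

include hinc hTuran in
/-- Main combinatorial lemma: some vertex has a link with at most two
reachability classes. -/
lemma exists_good (h5 : 5 ≤ S.card) :
    ∃ v ∈ S, ∃ x y : Fin n, ∀ w ∈ S.erase v, Reach H S v w x ∨ Reach H S v w y := by
  classical
  by_contra hbad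
  push_neg at hbad
  have hconn : ∀ v a p q : Fin n, v ∈ S → a ∈ S → a ≠ v →
      p ∈ S.erase v → q ∈ S.erase v → ¬ Reach H S v a p → ¬ Reach H S v a q →
      Reach H S a p q := by
    intro v a p q hv ha hav hp hq hap haq
    obtain ⟨hpv, hpS⟩ := Finset.mem_erase.1 hp
    obtain ⟨hqv, hqS⟩ := Finset.mem_erase.1 hq
    by_cases hpq0 : p = q
    · subst hpq0; exact Relation.ReflTransGen.refl
    by_cases hr : Reach H S v p q
    · obtain ⟨z, hz, hz1, hz2⟩ := hbad v hv p a
      obtain ⟨hzv, hzS⟩ := Finset.mem_erase.1 hz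
      have e1 : Eg H S a p z := trans_triple H S hinc hTuran hv ha hpS hzS hav hpv hzv
        hap (fun h => hz2 (Reach.symm H S h)) (fun h => hz1 (Reach.symm H S h))
      have e2 : Eg H S a q z := trans_triple H S hinc hTuran hv ha hqS hzS hav hqv hzv
        haq (fun h => hz2 (Reach.symm H S h))
        (fun h => hz1 (Reach.symm H S (Reach.trans H S hr h)))
      exact Reach.trans H S (Relation.ReflTransGen.single e1)
        (Reach.symm H S (Relation.ReflTransGen.single e2))
    · exact Relation.ReflTransGen.single
        (trans_triple H S hinc hTuran hv ha hpS hqS hav hpv hqv hap haq hr)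
  have key : ∀ N : ℕ, ∀ v a : Fin n, v ∈ S → a ∈ S.erase v →
      ((S.erase v).filter (fun u => Reach H S v a u)).card ≤ N → False := by
    intro N
    induction N with
    | zero =>
      intro v a hv ha hc
      have hmem : a ∈ (S.erase v).filter (fun u => Reach H S v a u) :=
        Finset.mem_filter.2 ⟨ha, Relation.ReflTransGen.refl⟩
      have := Finset.card_pos.2 ⟨a, hmem⟩
      omega
    | succ N ih =>
      intro v a hv ha hcard
      obtain ⟨hav, haS⟩ := Finset.mem_erase.1 ha
      obtain ⟨z, hz, hz1, -⟩ := hbad v hv a a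
      obtain ⟨hzv, hzS⟩ := Finset.mem_erase.1 hz
      obtain ⟨w, hw, hw1, hw2⟩ := hbad a haS z v
      obtain ⟨hwa, hwS⟩ := Finset.mem_erase.1 hw
      have hwv : w ≠ v := fun h => hw2 (h ▸ Relation.ReflTransGen.refl)
      have hsub : (S.erase a).filter (fun u => Reach H S a w u) ⊆
          ((S.erase v).filter (fun u => Reach H S v a u)).erase a := by
        intro u hu
        obtain ⟨hu1, hu2⟩ := Finset.mem_filter.1 hu
        obtain ⟨hua, huS⟩ := Finset.mem_erase.1 hu1
        have huv : u ≠ v := fun h => hw2 (h ▸ hu2)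
        have hureach : Reach H S v a u := by
          by_contra hnr
          exact hw1 (Reach.trans H S hu2 (hconn v a u z hv haS hav
            (Finset.mem_erase.2 ⟨huv, huS⟩) hz hnr (fun h => hz1 (Reach.symm H S h))))
        exact Finset.mem_erase.2 ⟨hua,
          Finset.mem_filter.2 ⟨Finset.mem_erase.2 ⟨huv, huS⟩, hureach⟩⟩
      have hamem : a ∈ (S.erase v).filter (fun u => Reach H S v a u) :=
        Finset.mem_filter.2 ⟨ha, Relation.ReflTransGen.refl⟩
      have hcard' : ((S.erase a).filter (fun u => Reach H S a w u)).card ≤ N := by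
        have h1 := Finset.card_le_card hsub
        have h2 := Finset.card_erase_of_mem hamem
        have h3 := Finset.card_pos.2 ⟨a, hamem⟩
        omega
      exact ih a w haS hw hcard'
  obtain ⟨v, hv⟩ := Finset.card_pos.1 (show 0 < S.card by omega)
  obtain ⟨a, ha⟩ := Finset.card_pos.1
    (show 0 < (S.erase v).card by rw [Finset.card_erase_of_mem hv]; omega)
  exact key _ v a hv ha le_rfl

include hinc in
/-- An edge of the link of `v` gives an element of the row span projecting to a
difference of basis vectors. -/
lemma edge_vec {v b c : Fin n} (hv : v ∈ S) (he : Eg H S v b c) :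
    ∃ r ∈ span ℚ (rowSet H S), phiv v r = evec b - evec c := by
  obtain ⟨hbS, hcS, hbv, hcv, hbc, t, ht, hset⟩ := he
  obtain ⟨h12, h23⟩ := hinc t ht
  have hmemS : ∀ x : Fin n, x ∈ ({t.1, t.2.1, t.2.2} : Finset (Fin n)) → x ∈ S := by
    intro x hx
    rw [hset] at hx
    simp only [mem_insert, mem_singleton] at hx
    rcases hx with rfl | rfl | rfl <;> assumption
  have hrow : rowFn t ∈ rowSet H S :=
    ⟨t, ht, hmemS _ (by simp), hmemS _ (by simp), hmemS _ (by simp), rfl⟩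
  have hrmem : rowFn t ∈ span ℚ (rowSet H S) := subset_span hrow
  have hbpos : b = t.1 ∨ b = t.2.1 ∨ b = t.2.2 := by
    have : b ∈ ({t.1, t.2.1, t.2.2} : Finset (Fin n)) := by rw [hset]; simp
    simpa using this
  have hcpos : c = t.1 ∨ c = t.2.1 ∨ c = t.2.2 := by
    have : c ∈ ({t.1, t.2.1, t.2.2} : Finset (Fin n)) := by rw [hset]; simp
    simpa using this
  have hvpos : v = t.1 ∨ v = t.2.1 ∨ v = t.2.2 := by
    have : v ∈ ({t.1, t.2.1, t.2.2} : Finset (Fin n)) := by rw [hset]; simp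
    simpa using this
  have hrow1 : phiv t.1 (rowFn t) = evec t.2.2 - evec t.2.1 := phiv_row_1 h12 h23
  have hrow2 : phiv t.2.1 (rowFn t) = evec t.1 - evec t.2.2 := phiv_row_2 h12 h23
  have hrow3 : phiv t.2.2 (rowFn t) = evec t.2.1 - evec t.1 := phiv_row_3 h12 h23
  rcases hbpos with hb | hb | hb <;> rcases hcpos with hc | hc | hc
  · exact absurd (hb.trans hc.symm) hbc
  · -- b = t.1, c = t.2.1 ⇒ v = t.2.2
    have hv3 : v = t.2.2 := by
      rcases hvpos with h | h | h
      · exact absurd (hb.trans h.symm) hbv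
      · exact absurd (hc.trans h.symm) hcv
      · exact h
    refine ⟨-(rowFn t), neg_mem hrmem, ?_⟩
    rw [map_neg, hv3, hrow3, hb, hc, neg_sub]
  · -- b = t.1, c = t.2.2 ⇒ v = t.2.1
    have hv2 : v = t.2.1 := by
      rcases hvpos with h | h | h
      · exact absurd (hb.trans h.symm) hbv
      · exact h
      · exact absurd (hc.trans h.symm) hcv
    exact ⟨rowFn t, hrmem, by rw [hv2, hrow2, hb, hc]⟩
  · -- b = t.2.1, c = t.1 ⇒ v = t.2.2
    have hv3 : v = t.2.2 := by
      rcases hvpos with h | h | h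
      · exact absurd (hc.trans h.symm) hcv
      · exact absurd (hb.trans h.symm) hbv
      · exact h
    exact ⟨rowFn t, hrmem, by rw [hv3, hrow3, hb, hc]⟩
  · exact absurd (hb.trans hc.symm) hbc
  · -- b = t.2.1, c = t.2.2 ⇒ v = t.1
    have hv1 : v = t.1 := by
      rcases hvpos with h | h | h
      · exact h
      · exact absurd (hb.trans h.symm) hbv
      · exact absurd (hc.trans h.symm) hcv
    refine ⟨-(rowFn t), neg_mem hrmem, ?_⟩
    rw [map_neg, hv1, hrow1, hb, hc, neg_sub]
  · -- b = t.2.2, c = t.1 ⇒ v = t.2.1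
    have hv2 : v = t.2.1 := by
      rcases hvpos with h | h | h
      · exact absurd (hc.trans h.symm) hcv
      · exact h
      · exact absurd (hb.trans h.symm) hbv
    refine ⟨-(rowFn t), neg_mem hrmem, ?_⟩
    rw [map_neg, hv2, hrow2, hb, hc, neg_sub]
  · -- b = t.2.2, c = t.2.1 ⇒ v = t.1
    have hv1 : v = t.1 := by
      rcases hvpos with h | h | h
      · exact h
      · exact absurd (hc.trans h.symm) hcv
      · exact absurd (hb.trans h.symm) hbv
    exact ⟨rowFn t, hrmem, by rw [hv1, hrow1, hb, hc]⟩
  · exact absurd (hb.trans hc.symm) hbc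

include hinc in
lemma tele {v b c : Fin n} (hv : v ∈ S) (h : Reach H S v b c) :
    ∃ u ∈ span ℚ (rowSet H S), phiv v u = evec b - evec c := by
  induction h with
  | refl => exact ⟨0, Submodule.zero_mem _, by simp⟩
  | @tail b' c hbb' hedge ih =>
    obtain ⟨u, hu, hphiu⟩ := ih
    obtain ⟨r, hr, hphir⟩ := edge_vec H S hinc hv hedge
    exact ⟨u + r, Submodule.add_mem _ hu hr, by
      rw [map_add, hphiu, hphir, sub_add_sub_cancel]⟩

include hinc in
lemma row_supported {u : Fin n × Fin n → ℚ} (hu : u ∈ span ℚ (rowSet H S))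
    {p : Fin n × Fin n} (hp : p.1 ∉ S ∨ p.2 ∉ S) : u p = 0 := by
  let K : Submodule ℚ (Fin n × Fin n → ℚ) :=
    { carrier := {u | ∀ q : Fin n × Fin n, (q.1 ∉ S ∨ q.2 ∉ S) → u q = 0}
      add_mem' := fun ha hb q hq => by
        simp only [Pi.add_apply, ha q hq, hb q hq, add_zero]
      zero_mem' := fun q hq => rfl
      smul_mem' := fun c u hu q hq => by
        simp only [Pi.smul_apply, hu q hq, smul_zero] }
  have hle : span ℚ (rowSet H S) ≤ K := by
    rw [span_le]
    rintro r ⟨t, ht, h1, h2, h3, rfl⟩ q hq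
    simp only [rowFn]
    split_ifs with i1 i2 i3
    · subst i1; simp at hq; tauto
    · subst i2; simp at hq; tauto
    · subst i3; simp at hq; tauto
    · rfl
  exact hle hu p hp

include hinc hTuran in
theorem main : ∃ (ι : Type) (_ : Fintype ι) (f : ι → (Fin n × Fin n → ℚ)),
    Fintype.card ι = Nat.choose (S.card - 2) 2 ∧
    (∀ i, f i ∈ span ℚ (rowSet H S)) ∧ LinearIndependent ℚ f := by
  classical
  induction S using Finset.strongInductionOn with
  | _ S IH =>
  by_cases h3 : S.card ≤ 3
  · refine ⟨PEmpty, inferInstance, fun i => i.elim, ?_, fun i => i.elim,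
      linearIndependent_empty_type⟩
    rw [Nat.choose_eq_zero_of_lt (show S.card - 2 < 2 by omega)]
    simp
  by_cases h4 : S.card = 4
  · obtain ⟨t, ht, ht1, ht2, ht3⟩ := hTuran S h4
    refine ⟨PUnit, inferInstance, fun _ => rowFn t, ?_,
      fun _ => subset_span ⟨t, ht, ht1, ht2, ht3, rfl⟩, ?_⟩
    · rw [show S.card - 2 = 2 by omega]
      simp
    · apply linearIndependent_unique_iff.2
      intro h
      have := congrFun h (t.1, t.2.1)
      simp [rowFn] at this
  -- main case
  have h5 : 5 ≤ S.card := by omega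
  obtain ⟨v, hv, x, y, hxy⟩ := exists_good H S hinc hTuran h5
  obtain ⟨ι', i', f1, hcard1, hmem1, hind1⟩ := IH (S.erase v) (Finset.erase_ssubset hv)
  have hS'card : (S.erase v).card = S.card - 1 := Finset.card_erase_of_mem hv
  have hJ0card : S.card - 3 ≤ (((S.erase v).erase x).erase y).card := by
    have e1 : (S.erase v).card - 1 ≤ ((S.erase v).erase x).card :=
      Finset.pred_card_le_card_erase
    have e2 : ((S.erase v).erase x).card - 1 ≤ (((S.erase v).erase x).erase y).card :=
      Finset.pred_card_le_card_erase
    omega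
  obtain ⟨J, hJsub, hJcard⟩ :=
    Finset.exists_subset_card_eq hJ0card
  have hJmem : ∀ w : Fin n, w ∈ J → w ∈ S.erase v ∧ w ≠ x ∧ w ≠ y := by
    intro w hw
    have h' := hJsub hw
    obtain ⟨hwy, h''⟩ := Finset.mem_erase.1 h'
    obtain ⟨hwx, h'''⟩ := Finset.mem_erase.1 h''
    exact ⟨h''', hwx, hwy⟩
  have hchoice : ∀ w : {w // w ∈ J}, ∃ u : Fin n × Fin n → ℚ,
      u ∈ span ℚ (rowSet H S) ∧ ∃ b : Fin n, (b = x ∨ b = y) ∧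
        phiv v u = evec (w : Fin n) - evec b := by
    rintro ⟨w, hw⟩
    obtain ⟨hwS, hwx, hwy⟩ := hJmem w hw
    rcases hxy w hwS with h | h
    · obtain ⟨u, hu, hphiu⟩ := tele H S hinc hv h
      exact ⟨u, hu, x, Or.inl rfl, hphiu⟩
    · obtain ⟨u, hu, hphiu⟩ := tele H S hinc hv h
      exact ⟨u, hu, y, Or.inr rfl, hphiu⟩
  choose f2 hf2span b hbxy hphi using hchoice
  have hindphi : LinearIndependent ℚ (fun w : {w // w ∈ J} => phiv v (f2 w)) := by
    rw [Fintype.linearIndependent_iff]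
    intro c hc w0
    have hc0 := congrFun hc (w0 : Fin n)
    simp only [Finset.sum_apply, Pi.smul_apply, Pi.zero_apply] at hc0
    rw [Finset.sum_eq_single w0] at hc0
    · rw [hphi w0] at hc0
      obtain ⟨hw0S, hw0x, hw0y⟩ := hJmem w0 w0.2
      have hb0 : (w0 : Fin n) ≠ b w0 := by
        rcases hbxy w0 with h | h <;> rw [h] <;> assumption
      simpa [evec, hb0] using hc0
    · intro w _ hww0
      rw [hphi w]
      have hne : (w0 : Fin n) ≠ (w : Fin n) := fun h => hww0 (Subtype.ext h.symm)
      have hb : (w0 : Fin n) ≠ b w := by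
        obtain ⟨hw0S, hw0x, hw0y⟩ := hJmem w0 w0.2
        rcases hbxy w with h | h <;> rw [h] <;> assumption
      simp [evec, hne, hb]
    · intro h; exact absurd (Finset.mem_univ w0) h
  have hind2 : LinearIndependent ℚ f2 := LinearIndependent.of_comp (phiv v) hindphi
  have hsub' : rowSet H (S.erase v) ⊆ rowSet H S := by
    rintro r ⟨t, ht, h1, h2, h3', rfl⟩
    exact ⟨t, ht, (Finset.mem_erase.1 h1).2, (Finset.mem_erase.1 h2).2,
      (Finset.mem_erase.1 h3').2, rfl⟩
  have hspan1 : span ℚ (Set.range f1) ≤ span ℚ (rowSet H (S.erase v)) := by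
    rw [span_le]; rintro r ⟨i, rfl⟩; exact hmem1 i
  have hker : span ℚ (rowSet H (S.erase v)) ≤ LinearMap.ker (phiv v) := by
    rw [span_le]
    rintro r ⟨t, ht, h1, h2, h3', rfl⟩
    exact LinearMap.mem_ker.2 (phiv_row_notin
      (Ne.symm (Finset.mem_erase.1 h1).1) (Ne.symm (Finset.mem_erase.1 h2).1)
      (Ne.symm (Finset.mem_erase.1 h3').1))
  have hdisj : Disjoint (span ℚ (Set.range f1)) (span ℚ (Set.range f2)) := by
    rw [disjoint_def]
    intro z hz1 hz2
    have hzker : phiv v z = 0 := hker (hspan1 hz1)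
    obtain ⟨c, hc⟩ := (mem_span_range_iff_exists_fun ℚ).1 hz2
    have hsum : ∑ w, c w • phiv v (f2 w) = 0 := by
      have h1 : phiv v (∑ w, c w • f2 w) = ∑ w, c w • phiv v (f2 w) := by
        rw [map_sum]
        exact Finset.sum_congr rfl (fun w _ => map_smul _ _ _)
      rw [← h1, hc, hzker]
    have hc0 := Fintype.linearIndependent_iff.1 hindphi c hsum
    rw [← hc]
    exact Finset.sum_eq_zero (fun w _ => by rw [hc0 w, zero_smul])
  have hindsum : LinearIndependent ℚ (Sum.elim f1 f2) := hind1.sum_type hind2 hdisj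
  refine ⟨ι' ⊕ {w // w ∈ J}, inferInstance, Sum.elim f1 f2, ?_, ?_, hindsum⟩
  · have harith : Nat.choose (S.card - 3) 2 + (S.card - 3) = Nat.choose (S.card - 2) 2 := by
      have h1 : S.card - 2 = (S.card - 3) + 1 := by omega
      rw [h1, Nat.choose_succ_succ, Nat.choose_one_right, Nat.add_comm]
    rw [Fintype.card_sum, hcard1, Fintype.card_coe, hJcard, hS'card,
      show S.card - 1 - 2 = S.card - 3 by omega, harith]
  · rintro (i | w)
    · exact Submodule.span_mono hsub' (hmem1 i)
    · exact hf2span w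

end WithH

end Stmt17Aux

/-- If every 4-subset of `[n]` contains a triple of `H`, then the boundary map
`∂₂` has rank at least `C(n−2,2)` (equivalently, `dim H₁ ≤ n − 2`). -/
theorem stmt17 (n : ℕ) (H : Finset (Fin n × Fin n × Fin n))
    (hinc : ∀ t ∈ H, t.1 < t.2.1 ∧ t.2.1 < t.2.2)
    (hTuran : ∀ S : Finset (Fin n), S.card = 4 →
      ∃ t ∈ H, t.1 ∈ S ∧ t.2.1 ∈ S ∧ t.2.2 ∈ S) :
    Nat.choose (n - 2) 2 ≤ (bdryMatrix H).rank := by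
  classical
  obtain ⟨ι, iF, f, hcard, hmem, hind⟩ :=
    Stmt17Aux.main H Finset.univ hinc hTuran
  have hrange : Set.range (bdryMatrix H) = Stmt17Aux.rowSet H Finset.univ := by
    ext r
    constructor
    · rintro ⟨⟨t, ht⟩, rfl⟩
      exact ⟨t, ht, Finset.mem_univ _, Finset.mem_univ _, Finset.mem_univ _, rfl⟩
    · rintro ⟨t, ht, -, -, -, rfl⟩
      exact ⟨⟨t, ht⟩, rfl⟩
  rw [Matrix.rank_eq_finrank_span_row, show (bdryMatrix H).row = bdryMatrix H from rfl, hrange]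
  let f' : ι → (Submodule.span ℚ (Stmt17Aux.rowSet H Finset.univ)) :=
    fun i => ⟨f i, hmem i⟩
  have hind' : LinearIndependent ℚ f' :=
    LinearIndependent.of_comp (Submodule.span ℚ (Stmt17Aux.rowSet H Finset.univ)).subtype hind
  have := hind'.fintype_card_le_finrank
  rw [hcard] at this
  simpa using this
end
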